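/- arXiv:0904.1469 — 5 statements merged into one kernel-verified Lean document; each statement's English description precedes it below -/
import Mathlib

section
/- Let 1 ≤ j < k ≤ n and let m be a nonzero integer. Suppose a reduced word w has jk-factorisation w = w_0 s_{i_1} w_1 ⋯ s_{i_ℓ} w_ℓ in which no factor w_ν has length 2|m|. Then the jk-factorisation of the reduced word (w)a_{jk}^m has the form w_0' s_{i_1} w_1' ⋯ s_{i_ℓ} w_ℓ' with the same separating letters s_{i_1},…,s_{i_ℓ}, and for every ν with 1 ≤ ν ≤ ℓ−1, if w_ν is critical then w_ν' is critical and |w_ν| + |w_ν'| ≥ 2|m|. -/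
/-- Relators for the braid group `Br_n` on generators `σ_1, …, σ_{n-1}`
(indexed by natural numbers; out-of-range generators are killed). -/
def braidRels (n : ℕ) : Set (FreeGroup ℕ) :=
  {r | (∃ i, 1 ≤ i ∧ i + 2 ≤ n ∧
        r = FreeGroup.of i * FreeGroup.of (i+1) * FreeGroup.of i *
            (FreeGroup.of (i+1) * FreeGroup.of i * FreeGroup.of (i+1))⁻¹) ∨
       (∃ i j, 1 ≤ i ∧ i + 2 ≤ j ∧ j + 1 ≤ n ∧
        r = FreeGroup.of i * FreeGroup.of j * (FreeGroup.of j * FreeGroup.of i)⁻¹) ∨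
       (∃ i, (i = 0 ∨ n ≤ i) ∧ r = FreeGroup.of i)}

/-- The braid group on `n` strands. -/
abbrev BraidGroup (n : ℕ) := PresentedGroup (braidRels n)

/-- The Artin generator `σ_i` of the braid group (`1 ≤ i ≤ n-1`). -/
def braidGen (n i : ℕ) : BraidGroup n := PresentedGroup.of i

/-- The band generator `a_{ij} = (σ_{j-1} ⋯ σ_{i+1}) σ_i (σ_{j-1} ⋯ σ_{i+1})⁻¹`. -/
def band (n i j : ℕ) : BraidGroup n :=
  (((List.range (j - 1 - i)).map (fun t => braidGen n (j - 1 - t))).prod) * braidGen n i *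
  (((List.range (j - 1 - i)).map (fun t => braidGen n (j - 1 - t))).prod)⁻¹

/-- The band generator with the convention `a_{ji} = a_{ij}`. -/
def bandS (n i j : ℕ) : BraidGroup n := band n (min i j) (max i j)

/-- The subgroup `E_M ≤ Br_n` generated by the powers `a_{ij}^{m_{ij}}`. -/
def bandSubgroup (n : ℕ) (m : ℕ → ℕ → ℕ) : Subgroup (BraidGroup n) :=
  Subgroup.closure {x | ∃ i j, 1 ≤ i ∧ i < j ∧ j ≤ n ∧ x = band n i j ^ m i j}

/-- Relators of the universal Coxeter group `C̃_n = ⟨s_1,…,s_n ∣ s_i² = 1⟩`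
(generators indexed by natural numbers; out-of-range generators are killed). -/
def ucoxRels (n : ℕ) : Set (FreeGroup ℕ) :=
  {r | (∃ i, 1 ≤ i ∧ i ≤ n ∧ r = FreeGroup.of i * FreeGroup.of i) ∨
       (∃ i, (i = 0 ∨ n < i) ∧ r = FreeGroup.of i)}

/-- The universal Coxeter group `C̃_n`, the free product of `n` copies of `ℤ/2ℤ`. -/
abbrev UCox (n : ℕ) := PresentedGroup (ucoxRels n)

/-- The generator `s_i` of `C̃_n`. -/
def cS (n i : ℕ) : UCox n := PresentedGroup.of i

lemma mk_rel_eq_one {α : Type*} {rels : Set (FreeGroup α)} {r : FreeGroup α} (h : r ∈ rels) :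
    (PresentedGroup.mk rels r) = 1 :=
  (QuotientGroup.eq_one_iff r).mpr (Subgroup.subset_normalClosure h)

lemma cS_sq (n i : ℕ) (h1 : 1 ≤ i) (h2 : i ≤ n) : cS n i * cS n i = 1 := by
  have := mk_rel_eq_one (show FreeGroup.of i * FreeGroup.of i ∈ ucoxRels n from
    Or.inl ⟨i, h1, h2, rfl⟩)
  simpa [cS, PresentedGroup.of] using this

lemma cS_junk (n i : ℕ) (h : i = 0 ∨ n < i) : cS n i = 1 :=
  mk_rel_eq_one (Or.inr ⟨i, h, rfl⟩)

lemma cS_cancel (n i : ℕ) (h1 : 1 ≤ i) (h2 : i ≤ n) : ∀ t : UCox n, cS n i * (cS n i * t) = t := by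
  intro t; rw [← mul_assoc, cS_sq n i h1 h2, one_mul]
/-- The effect of the Hurwitz automorphism of `σ_j` on the generators of `C̃_n`:
`s_j ↦ s_j s_{j+1} s_j`, `s_{j+1} ↦ s_j`. -/
def hmap (n j : ℕ) : ℕ → UCox n := fun i =>
  if i = j then cS n j * cS n (j+1) * cS n j else if i = j + 1 then cS n j else cS n i

/-- The effect of the inverse Hurwitz automorphism of `σ_j` on the generators of `C̃_n`. -/
def hmapInv (n j : ℕ) : ℕ → UCox n := fun i =>
  if i = j then cS n (j+1) else if i = j + 1 then cS n (j+1) * cS n j * cS n (j+1) else cS n i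

lemma hmap_self (n j : ℕ) : hmap n j j = cS n j * cS n (j+1) * cS n j := by simp [hmap]
lemma hmap_succ (n j : ℕ) : hmap n j (j+1) = cS n j := by simp [hmap]
lemma hmap_other (n j x : ℕ) (h1 : x ≠ j) (h2 : x ≠ j + 1) : hmap n j x = cS n x := by
  simp [hmap, h1, h2]
lemma hmapInv_self (n j : ℕ) : hmapInv n j j = cS n (j+1) := by simp [hmapInv]
lemma hmapInv_succ (n j : ℕ) : hmapInv n j (j+1) = cS n (j+1) * cS n j * cS n (j+1) := by
  simp [hmapInv]
lemma hmapInv_other (n j x : ℕ) (h1 : x ≠ j) (h2 : x ≠ j + 1) : hmapInv n j x = cS n x := by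
  simp [hmapInv, h1, h2]

lemma hmap_rels (n j : ℕ) (hj1 : 1 ≤ j) (hj2 : j + 1 ≤ n) :
    ∀ r ∈ ucoxRels n, FreeGroup.lift (hmap n j) r = 1 := by
  rintro r (⟨i, hi1, hi2, rfl⟩ | ⟨i, hi, rfl⟩)
  · rw [map_mul, FreeGroup.lift_apply_of]
    by_cases e1 : i = j
    · subst e1
      rw [hmap_self]
      have ha := cS_cancel n i hi1 (by omega)
      have hb := cS_cancel n (i+1) (by omega) hj2
      calc cS n i * cS n (i+1) * cS n i * (cS n i * cS n (i+1) * cS n i)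
          = cS n i * (cS n (i+1) * (cS n i * (cS n i * (cS n (i+1) * cS n i)))) := by
            simp [mul_assoc]
        _ = 1 := by rw [ha, hb, cS_sq n i hi1 (by omega)]
    · by_cases e2 : i = j + 1
      · subst e2; rw [hmap_succ]; exact cS_sq n j hj1 (by omega)
      · rw [hmap_other n j i e1 e2]; exact cS_sq n i hi1 hi2
  · rw [FreeGroup.lift_apply_of, hmap_other n j i (by omega) (by omega)]
    exact cS_junk n i hi

lemma hmapInv_rels (n j : ℕ) (hj1 : 1 ≤ j) (hj2 : j + 1 ≤ n) :
    ∀ r ∈ ucoxRels n, FreeGroup.lift (hmapInv n j) r = 1 := by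
  rintro r (⟨i, hi1, hi2, rfl⟩ | ⟨i, hi, rfl⟩)
  · rw [map_mul, FreeGroup.lift_apply_of]
    by_cases e1 : i = j
    · subst e1; rw [hmapInv_self]; exact cS_sq n (i+1) (by omega) hj2
    · by_cases e2 : i = j + 1
      · subst e2
        rw [hmapInv_succ]
        have ha := cS_cancel n (j+1) (by omega) hj2
        have hb := cS_cancel n j hj1 (by omega)
        calc cS n (j+1) * cS n j * cS n (j+1) * (cS n (j+1) * cS n j * cS n (j+1))
            = cS n (j+1) * (cS n j * (cS n (j+1) * (cS n (j+1) * (cS n j * cS n (j+1))))) := by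
              simp [mul_assoc]
          _ = 1 := by rw [ha, hb, cS_sq n (j+1) (by omega) hj2]
      · rw [hmapInv_other n j i e1 e2]; exact cS_sq n i hi1 hi2
  · rw [FreeGroup.lift_apply_of, hmapInv_other n j i (by omega) (by omega)]
    exact cS_junk n i hi

/-- The Hurwitz endomorphism of `C̃_n` induced by `σ_j`. -/
def hEnd (n j : ℕ) (hj1 : 1 ≤ j) (hj2 : j + 1 ≤ n) : UCox n →* UCox n :=
  PresentedGroup.toGroup (hmap_rels n j hj1 hj2)

/-- The inverse Hurwitz endomorphism of `C̃_n` induced by `σ_j`. -/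
def hEndInv (n j : ℕ) (hj1 : 1 ≤ j) (hj2 : j + 1 ≤ n) : UCox n →* UCox n :=
  PresentedGroup.toGroup (hmapInv_rels n j hj1 hj2)

lemma hEnd_cS (n j : ℕ) (hj1 : 1 ≤ j) (hj2 : j + 1 ≤ n) (x : ℕ) :
    hEnd n j hj1 hj2 (cS n x) = hmap n j x :=
  PresentedGroup.toGroup.of _

lemma hEndInv_cS (n j : ℕ) (hj1 : 1 ≤ j) (hj2 : j + 1 ≤ n) (x : ℕ) :
    hEndInv n j hj1 hj2 (cS n x) = hmapInv n j x :=
  PresentedGroup.toGroup.of _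
lemma hEnd_comp_hEndInv (n j : ℕ) (hj1 : 1 ≤ j) (hj2 : j + 1 ≤ n) :
    (hEnd n j hj1 hj2).comp (hEndInv n j hj1 hj2) = MonoidHom.id (UCox n) := by
  apply PresentedGroup.ext
  intro x
  simp only [MonoidHom.comp_apply, MonoidHom.id_apply]
  show hEnd n j hj1 hj2 (hEndInv n j hj1 hj2 (cS n x)) = cS n x
  rw [hEndInv_cS]
  by_cases e1 : x = j
  · rw [e1]
    rw [hmapInv_self, hEnd_cS, hmap_succ]
  · by_cases e2 : x = j + 1
    · rw [e2]
      rw [hmapInv_succ, map_mul, map_mul, hEnd_cS, hEnd_cS, hmap_self, hmap_succ]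
      have Kj := cS_cancel n j hj1 (by omega)
      have Qj := cS_sq n j hj1 (by omega)
      simp only [mul_assoc]
      rw [Kj, Qj, mul_one]
    · rw [hmapInv_other n j x e1 e2, hEnd_cS, hmap_other n j x e1 e2]

lemma hEndInv_comp_hEnd (n j : ℕ) (hj1 : 1 ≤ j) (hj2 : j + 1 ≤ n) :
    (hEndInv n j hj1 hj2).comp (hEnd n j hj1 hj2) = MonoidHom.id (UCox n) := by
  apply PresentedGroup.ext
  intro x
  simp only [MonoidHom.comp_apply, MonoidHom.id_apply]
  show hEndInv n j hj1 hj2 (hEnd n j hj1 hj2 (cS n x)) = cS n x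
  rw [hEnd_cS]
  by_cases e1 : x = j
  · rw [e1]
    rw [hmap_self, map_mul, map_mul, hEndInv_cS, hEndInv_cS, hmapInv_self, hmapInv_succ]
    have K := cS_cancel n (j+1) (by omega) hj2
    have Q := cS_sq n (j+1) (by omega) hj2
    simp only [mul_assoc]
    rw [K, Q, mul_one]
  · by_cases e2 : x = j + 1
    · rw [e2]
      rw [hmap_succ, hEndInv_cS, hmapInv_self]
    · rw [hmap_other n j x e1 e2, hEndInv_cS, hmapInv_other n j x e1 e2]

/-- The Hurwitz automorphism of `C̃_n` induced by `σ_j`: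
`s_j ↦ s_j s_{j+1} s_j`, `s_{j+1} ↦ s_j`. -/
def hAut (n j : ℕ) (hj1 : 1 ≤ j) (hj2 : j + 1 ≤ n) : MulAut (UCox n) :=
  MonoidHom.toMulEquiv (hEnd n j hj1 hj2) (hEndInv n j hj1 hj2)
    (hEndInv_comp_hEnd n j hj1 hj2) (hEnd_comp_hEndInv n j hj1 hj2)

lemma hAut_apply (n j : ℕ) (hj1 : 1 ≤ j) (hj2 : j + 1 ≤ n) (x : UCox n) :
    hAut n j hj1 hj2 x = hEnd n j hj1 hj2 x := rfl
lemma braid_hcomp (n i : ℕ) (ha1 : 1 ≤ i) (ha2 : i + 1 ≤ n) (hb1 : 1 ≤ i + 1)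
    (hb2 : i + 1 + 1 ≤ n) :
    (hEnd n i ha1 ha2).comp ((hEnd n (i+1) hb1 hb2).comp (hEnd n i ha1 ha2)) =
      (hEnd n (i+1) hb1 hb2).comp ((hEnd n i ha1 ha2).comp (hEnd n (i+1) hb1 hb2)) := by
  have Ki : ∀ t : UCox n, cS n i * (cS n i * t) = t := cS_cancel n i ha1 (by omega)
  have HA2 : hmap n i (i+1+1) = cS n (i+1+1) := hmap_other n i (i+1+1) (by omega) (by omega)
  have HB0 : hmap n (i+1) i = cS n i := hmap_other n (i+1) i (by omega) (by omega)
  apply PresentedGroup.ext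
  intro x
  simp only [MonoidHom.comp_apply]
  show hEnd n i ha1 ha2 (hEnd n (i+1) hb1 hb2 (hEnd n i ha1 ha2 (cS n x))) =
    hEnd n (i+1) hb1 hb2 (hEnd n i ha1 ha2 (hEnd n (i+1) hb1 hb2 (cS n x)))
  by_cases e1 : x = i
  · rw [e1]
    simp only [map_mul, hEnd_cS, hmap_self, hmap_succ, HA2, HB0, mul_assoc, Ki]
  · by_cases e2 : x = i + 1
    · rw [e2]
      simp only [map_mul, hEnd_cS, hmap_self, hmap_succ, HA2, HB0, mul_assoc, Ki]
    · by_cases e3 : x = i + 1 + 1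
      · rw [e3]
        simp only [map_mul, hEnd_cS, hmap_self, hmap_succ, HA2, HB0, mul_assoc, Ki]
      · have HAx : hmap n i x = cS n x := hmap_other n i x e1 e2
        have HBx : hmap n (i+1) x = cS n x := hmap_other n (i+1) x e2 e3
        simp only [hEnd_cS, HAx, HBx]
lemma comm_hcomp (n i j : ℕ) (hi1 : 1 ≤ i) (hij : i + 2 ≤ j) (hjn : j + 1 ≤ n)
    (hi2 : i + 1 ≤ n) (hj1 : 1 ≤ j) :
    (hEnd n i hi1 hi2).comp (hEnd n j hj1 hjn) =
      (hEnd n j hj1 hjn).comp (hEnd n i hi1 hi2) := by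
  have Hij : hmap n i j = cS n j := hmap_other n i j (by omega) (by omega)
  have Hij' : hmap n i (j+1) = cS n (j+1) := hmap_other n i (j+1) (by omega) (by omega)
  have Hji : hmap n j i = cS n i := hmap_other n j i (by omega) (by omega)
  have Hji' : hmap n j (i+1) = cS n (i+1) := hmap_other n j (i+1) (by omega) (by omega)
  apply PresentedGroup.ext
  intro x
  simp only [MonoidHom.comp_apply]
  show hEnd n i hi1 hi2 (hEnd n j hj1 hjn (cS n x)) =
    hEnd n j hj1 hjn (hEnd n i hi1 hi2 (cS n x))
  by_cases e1 : x = i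
  · rw [e1]
    simp only [map_mul, hEnd_cS, hmap_self, hmap_succ, Hij, Hij', Hji, Hji']
  · by_cases e2 : x = i + 1
    · rw [e2]
      simp only [map_mul, hEnd_cS, hmap_self, hmap_succ, Hij, Hij', Hji, Hji']
    · by_cases e3 : x = j
      · rw [e3]
        simp only [map_mul, hEnd_cS, hmap_self, hmap_succ, Hij, Hij', Hji, Hji']
      · by_cases e4 : x = j + 1
        · rw [e4]
          simp only [map_mul, hEnd_cS, hmap_self, hmap_succ, Hij, Hij', Hji, Hji']
        · have HAx : hmap n i x = cS n x := hmap_other n i x e1 e2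
          have HBx : hmap n j x = cS n x := hmap_other n j x e3 e4
          simp only [hEnd_cS, HAx, HBx]

/-- The images in `Aut(C̃_n)` of the braid generators under the (right) Hurwitz action. -/
noncomputable def bmap (n : ℕ) : ℕ → MulAut (UCox n) := fun j =>
  if h : 1 ≤ j ∧ j + 1 ≤ n then (hAut n j h.1 h.2)⁻¹ else 1

lemma bmap_in (n j : ℕ) (h1 : 1 ≤ j) (h2 : j + 1 ≤ n) :
    bmap n j = (hAut n j h1 h2)⁻¹ := by
  simp [bmap, h1, h2]

lemma bmap_out (n j : ℕ) (h : ¬(1 ≤ j ∧ j + 1 ≤ n)) : bmap n j = 1 := dif_neg h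

lemma hAut_braid (n i : ℕ) (ha1 : 1 ≤ i) (ha2 : i + 1 ≤ n) (hb1 : 1 ≤ i + 1)
    (hb2 : i + 1 + 1 ≤ n) :
    hAut n i ha1 ha2 * hAut n (i+1) hb1 hb2 * hAut n i ha1 ha2 =
      hAut n (i+1) hb1 hb2 * hAut n i ha1 ha2 * hAut n (i+1) hb1 hb2 := by
  have h := braid_hcomp n i ha1 ha2 hb1 hb2
  apply MulEquiv.ext
  intro x
  have := DFunLike.congr_fun h x
  simp only [MonoidHom.comp_apply] at this
  simpa only [MulAut.mul_apply, hAut_apply] using this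

lemma hAut_comm (n i j : ℕ) (hi1 : 1 ≤ i) (hij : i + 2 ≤ j) (hjn : j + 1 ≤ n)
    (hi2 : i + 1 ≤ n) (hj1 : 1 ≤ j) :
    hAut n i hi1 hi2 * hAut n j hj1 hjn = hAut n j hj1 hjn * hAut n i hi1 hi2 := by
  have h := comm_hcomp n i j hi1 hij hjn hi2 hj1
  apply MulEquiv.ext
  intro x
  have := DFunLike.congr_fun h x
  simp only [MonoidHom.comp_apply] at this
  simpa only [MulAut.mul_apply, hAut_apply] using this

lemma bmap_rels (n : ℕ) : ∀ r ∈ braidRels n, FreeGroup.lift (bmap n) r = 1 := by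
  rintro r (⟨i, hi1, hi2, rfl⟩ | ⟨i, j, hi1, hij, hjn, rfl⟩ | ⟨i, hi, rfl⟩)
  · simp only [map_mul, map_inv, FreeGroup.lift_apply_of]
    rw [bmap_in n i hi1 (by omega), bmap_in n (i+1) (by omega) (by omega)]
    set A := hAut n i hi1 (by omega : i + 1 ≤ n)
    set B := hAut n (i+1) (by omega : 1 ≤ i + 1) (by omega : i + 1 + 1 ≤ n)
    have k : A * B * A = B * A * B := hAut_braid n i hi1 (by omega) (by omega) (by omega)
    calc A⁻¹ * B⁻¹ * A⁻¹ * (B⁻¹ * A⁻¹ * B⁻¹)⁻¹ = (A * B * A)⁻¹ * (B * A * B) := by group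
      _ = (B * A * B)⁻¹ * (B * A * B) := by rw [k]
      _ = 1 := by group
  · simp only [map_mul, map_inv, FreeGroup.lift_apply_of]
    rw [bmap_in n i hi1 (by omega), bmap_in n j (by omega) hjn]
    set A := hAut n i hi1 (by omega : i + 1 ≤ n)
    set B := hAut n j (by omega : 1 ≤ j) hjn
    have k : A * B = B * A := hAut_comm n i j hi1 hij hjn (by omega) (by omega)
    calc A⁻¹ * B⁻¹ * (B⁻¹ * A⁻¹)⁻¹ = (B * A)⁻¹ * (A * B) := by group
      _ = (A * B)⁻¹ * (A * B) := by rw [← k]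
      _ = 1 := by group
  · rw [FreeGroup.lift_apply_of, bmap_out n i (by omega)]

/-- The Hurwitz action of the braid group `Br_n` on the universal Coxeter group `C̃_n`,
as a homomorphism to the automorphism group (the braid generator `σ_j` is sent to the
inverse of the Hurwitz automorphism, so that `ract` below is a right action). -/
noncomputable def hurwitzHom (n : ℕ) : BraidGroup n →* MulAut (UCox n) :=
  PresentedGroup.toGroup (bmap_rels n)

/-- The right Hurwitz action `(w)β` of `β ∈ Br_n` on `w ∈ C̃_n`: for the generator
`σ_j` one has `(s_j)σ_j = s_j s_{j+1} s_j`, `(s_{j+1})σ_j = s_j`, and all the other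
generators are fixed. -/
noncomputable def ract (n : ℕ) (w : UCox n) (β : BraidGroup n) : UCox n :=
  hurwitzHom n β⁻¹ w
/-- The element of `C̃_n` represented by a word in the letters `s_1, …, s_n`. -/
def wordProd (n : ℕ) (w : List ℕ) : UCox n := (w.map (cS n)).prod

/-- `w` is a reduced word: all letters lie in `{s_1,…,s_n}` and no two consecutive
letters are equal. -/
def IsRedWord (n : ℕ) (w : List ℕ) : Prop :=
  (∀ a ∈ w, 1 ≤ a ∧ a ≤ n) ∧ w.Chain' (· ≠ ·)

/-- Reassemble a word from factorisation data: `glue w₀ [(i₁,w₁),…,(i_ℓ,w_ℓ)]`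
is the word `w₀ s_{i₁} w₁ ⋯ s_{i_ℓ} w_ℓ`. -/
def glue : List ℕ → List (ℕ × List ℕ) → List ℕ
  | w0, [] => w0
  | w0, (s, w) :: rest => w0 ++ s :: glue w rest

/-- `(w₀, [(i₁,w₁),…,(i_ℓ,w_ℓ)])` is the `jk`-factorisation of `w`:
`w = w₀ s_{i₁} w₁ ⋯ s_{i_ℓ} w_ℓ`, every `w_ν` is a word in the letters `s_j, s_k`
and every separating letter satisfies `i_ν ∉ {j,k}`. -/
def IsJKFact (j k : ℕ) (w w0 : List ℕ) (tail : List (ℕ × List ℕ)) : Prop :=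
  w = glue w0 tail ∧ (∀ a ∈ w0, a = j ∨ a = k) ∧
    ∀ p ∈ tail, (p.1 ≠ j ∧ p.1 ≠ k) ∧ ∀ a ∈ p.2, a = j ∨ a = k

/-- The pairs `{a,b}` and `{j,k}` are crossing: the four numbers are pairwise distinct
and exactly one of `a`, `b` lies strictly between `j` and `k`. -/
def CrossingPairs (j k a b : ℕ) : Prop :=
  a ≠ j ∧ a ≠ k ∧ b ≠ j ∧ b ≠ k ∧ a ≠ b ∧ ((j < a ∧ a < k) ↔ ¬(j < b ∧ b < k))

/-- The factor `wν` of a `jk`-factorisation, with adjacent separating letters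
`a` (on the left) and `b` (on the right), is critical. -/
def CriticalFactor (j k a : ℕ) (wν : List ℕ) (b : ℕ) : Prop :=
  (Odd wν.length ∧ a = b) ∨ (Even wν.length ∧ CrossingPairs j k a b)

/-!
Write `ρ = s_j s_k` and `β` for the automorphism `w ↦ (w)a_{jk}` of `C̃_n`. It fixes `ρ`, sends
`s_j ↦ ρ s_j`, conjugates `s_i` by `ρ` if `j < i < k` and fixes the other `s_i` with `i ∉ {j, k}`.
A reduced `jk`-word is an alternating word, representing `ρ^p` or `ρ^p s_j`. Applying `β^m` to
`w = w₀ s_{i₁} w₁ ⋯ s_{i_ℓ} w_ℓ` and pushing the powers `ρ^{± m}` that conjugate the separators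
into the neighbouring factors turns each factor into another alternating word; no cancellation
occurs at the separators, so by uniqueness of reduced words this is the `jk`-factorisation of
`(w)a_{jk}^m`. A factor with exponent `p` becomes one with exponent `p + m c`, and `|c| = 1`
for a critical factor, so then `|w_ν| + |w_ν'| ≥ |2 m c| = 2|m|`.
-/

lemma cS_mul_self (n i : ℕ) : cS n i * cS n i = 1 := by
  by_cases h : 1 ≤ i ∧ i ≤ n
  · exact cS_sq n i h.1 h.2
  · rw [cS_junk n i (by omega), one_mul]

lemma cS_inv (n i : ℕ) : (cS n i)⁻¹ = cS n i :=
  inv_eq_of_mul_eq_one_right (cS_mul_self n i)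

lemma cS_mul_cS_mul (n i : ℕ) (x : UCox n) : cS n i * (cS n i * x) = x := by
  rw [← mul_assoc, cS_mul_self, one_mul]

lemma wordProd_cons (n a : ℕ) (l : List ℕ) : wordProd n (a :: l) = cS n a * wordProd n l := by
  simp [wordProd]

lemma wordProd_append (n : ℕ) (l₁ l₂ : List ℕ) :
    wordProd n (l₁ ++ l₂) = wordProd n l₁ * wordProd n l₂ := by
  simp [wordProd]

lemma MulAut.zpow_apply_of_apply_eq {G : Type*} [Group G] (f : MulAut G) (x : ℤ → G)
    (h : ∀ p, f (x p) = x (p + 1)) (m p : ℤ) : (f ^ m) (x p) = x (p + m) := by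
  induction m using Int.induction_on generalizing p with
  | zero => simp
  | succ m ih => rw [zpow_add_one, MulAut.mul_apply, h, ih, add_right_comm, add_assoc]
  | pred m ih =>
    have hp : x p = f (x (p - 1)) := by rw [h, sub_add_cancel]
    rw [zpow_sub_one, MulAut.mul_apply, hp, MulAut.inv_apply_self, ih]
    ring_nf

section NormalForm

lemma isRedWord_nil (n : ℕ) : IsRedWord n [] := ⟨by simp, List.isChain_nil⟩

def cancelCons (i : ℕ) : List ℕ → List ℕ
  | [] => [i]
  | a :: l => if a = i then l else i :: a :: l

lemma cancelCons_of_isChain {i : ℕ} {l : List ℕ} (h : (i :: l).IsChain (· ≠ ·)) :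
    cancelCons i l = i :: l := by
  cases l with
  | nil => rfl
  | cons a l => simp [cancelCons, Ne.symm (List.isChain_cons_cons.1 h).1]

lemma cancelCons_cancelCons {i : ℕ} {l : List ℕ} (hl : l.IsChain (· ≠ ·)) :
    cancelCons i (cancelCons i l) = l := by
  cases l with
  | nil => simp [cancelCons]
  | cons a l =>
    by_cases hai : a = i
    · subst hai
      simp only [cancelCons]
      exact cancelCons_of_isChain hl
    · simp [cancelCons, hai]

lemma isRedWord_cancelCons {n i : ℕ} (hi : 1 ≤ i ∧ i ≤ n) {l : List ℕ} (hl : IsRedWord n l) :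
    IsRedWord n (cancelCons i l) := by
  obtain ⟨hmem, hch⟩ := hl
  cases l with
  | nil => exact ⟨by simpa [cancelCons] using hi, List.isChain_singleton i⟩
  | cons a l =>
    by_cases hai : a = i
    · simp only [cancelCons, if_pos hai]
      exact ⟨fun x hx => hmem x (List.mem_cons_of_mem a hx), hch.tail⟩
    · simp only [cancelCons, if_neg hai]
      refine ⟨?_, List.isChain_cons_cons.2 ⟨Ne.symm hai, hch⟩⟩
      simpa [hi] using hmem

abbrev RedWord (n : ℕ) : Type := {l : List ℕ // IsRedWord n l}

def cancelConsPerm (n i : ℕ) : Equiv.Perm (RedWord n) :=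
  if hi : 1 ≤ i ∧ i ≤ n then
    Function.Involutive.toPerm (fun l => ⟨cancelCons i l.1, isRedWord_cancelCons hi l.2⟩)
      fun l => Subtype.ext (cancelCons_cancelCons l.2.2)
  else 1

lemma cancelConsPerm_rels (n : ℕ) :
    ∀ r ∈ ucoxRels n, FreeGroup.lift (cancelConsPerm n) r = 1 := by
  rintro r (⟨i, h1, h2, rfl⟩ | ⟨i, hi, rfl⟩)
  · ext l : 1
    simp only [map_mul, FreeGroup.lift_apply_of, cancelConsPerm, dif_pos (And.intro h1 h2),
      Equiv.Perm.mul_apply, Equiv.Perm.one_apply]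
    exact Subtype.ext (cancelCons_cancelCons l.2.2)
  · simp [cancelConsPerm]
    omega

/-- Left multiplication by `s_i` acts on reduced words by `cancelCons i`; evaluating this
action at the empty word recovers a reduced word from the element it represents. -/
def normalFormHom (n : ℕ) : UCox n →* Equiv.Perm (RedWord n) :=
  PresentedGroup.toGroup (cancelConsPerm_rels n)

lemma normalFormHom_wordProd {n : ℕ} {w : List ℕ} (hw : IsRedWord n w) :
    (normalFormHom n (wordProd n w) ⟨[], isRedWord_nil n⟩).1 = w := by
  induction w with
  | nil => rfl
  | cons a w ih =>
    have ha := hw.1 a List.mem_cons_self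
    rw [wordProd_cons, map_mul, Equiv.Perm.mul_apply, normalFormHom, cS,
      PresentedGroup.toGroup.of, cancelConsPerm, dif_pos ha]
    show cancelCons a _ = a :: w
    rw [← normalFormHom, ih ⟨fun x hx => hw.1 x (List.mem_cons_of_mem a hx), hw.2.tail⟩]
    exact cancelCons_of_isChain hw.2

theorem IsRedWord.eq_of_wordProd_eq {n : ℕ} {w₁ w₂ : List ℕ} (h₁ : IsRedWord n w₁)
    (h₂ : IsRedWord n w₂) (h : wordProd n w₁ = wordProd n w₂) : w₁ = w₂ := by
  rw [← normalFormHom_wordProd h₁, ← normalFormHom_wordProd h₂, h]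

end NormalForm

section AlternatingWords

def altList (a b : ℕ) : ℕ → List ℕ
  | 0 => []
  | r + 1 => a :: altList b a r

lemma length_altList (a b r : ℕ) : (altList a b r).length = r := by
  induction r generalizing a b with
  | zero => rfl
  | succ r ih => simp [altList, ih]

lemma mem_altList {a b r x : ℕ} (hx : x ∈ altList a b r) : x = a ∨ x = b := by
  induction r generalizing a b with
  | zero => simp [altList] at hx
  | succ r ih =>
    rcases List.mem_cons.1 hx with rfl | hx
    · exact Or.inl rfl
    · exact (ih hx).symm

lemma isChain_altList {a b : ℕ} (hab : a ≠ b) (r : ℕ) : (altList a b r).IsChain (· ≠ ·) := by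
  induction r generalizing a b with
  | zero => exact List.isChain_nil
  | succ r ih =>
    refine List.isChain_cons.2 ⟨?_, ih hab.symm⟩
    cases r <;> simp [altList, hab]

/-- `altWord j k t` represents `(s_j s_k)^p` for `t = 2p` and `(s_j s_k)^p s_j` for `t = 2p + 1`. -/
def altWord (j k : ℕ) (t : ℤ) : List ℕ :=
  if 0 ≤ t then altList j k t.toNat else altList k j t.natAbs

lemma length_altWord (j k : ℕ) (t : ℤ) : (altWord j k t).length = t.natAbs := by
  unfold altWord; split
  · rw [length_altList]; omega
  · exact length_altList _ _ _

lemma mem_altWord {j k x : ℕ} {t : ℤ} (hx : x ∈ altWord j k t) : x = j ∨ x = k := by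
  unfold altWord at hx; split at hx
  · exact mem_altList hx
  · exact (mem_altList hx).symm

lemma isChain_altWord {j k : ℕ} (hjk : j ≠ k) (t : ℤ) : (altWord j k t).IsChain (· ≠ ·) := by
  unfold altWord; split
  · exact isChain_altList hjk _
  · exact isChain_altList hjk.symm _

lemma altWord_zero (j k : ℕ) : altWord j k 0 = [] := rfl

lemma cons_altWord_of_nonpos (j k : ℕ) {t : ℤ} (ht : t ≤ 0) :
    j :: altWord j k t = altWord j k (1 - t) := by
  rcases ht.lt_or_eq with ht | rfl
  · simp only [altWord, if_neg (not_le.2 ht), if_pos (by omega : (0 : ℤ) ≤ 1 - t)]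
    rw [show (1 - t).toNat = t.natAbs + 1 by omega]
    rfl
  · rfl

lemma cons_altWord_of_nonneg (j k : ℕ) {t : ℤ} (ht : 0 ≤ t) :
    k :: altWord j k t = altWord j k (-1 - t) := by
  simp only [altWord, if_pos ht, if_neg (by omega : ¬ (0 : ℤ) ≤ -1 - t)]
  rw [show (-1 - t).natAbs = t.toNat + 1 by omega]
  rfl

lemma altWord_add_two_of_nonneg (j k : ℕ) {t : ℤ} (ht : 0 ≤ t) :
    altWord j k (t + 2) = j :: k :: altWord j k t := by
  simp only [altWord, if_pos ht, if_pos (by omega : (0 : ℤ) ≤ t + 2)]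
  rw [show (t + 2).toNat = t.toNat + 2 by omega]
  rfl

lemma altWord_of_le_neg_two (j k : ℕ) {t : ℤ} (ht : t ≤ -2) :
    altWord j k t = k :: j :: altWord j k (t + 2) := by
  rcases (show t + 2 = 0 ∨ t + 2 < 0 by omega) with h | h
  · rw [h, show t = -2 by omega]; rfl
  · simp only [altWord, if_neg (by omega : ¬ (0 : ℤ) ≤ t), if_neg (not_le.2 h)]
    rw [show t.natAbs = (t + 2).natAbs + 2 by omega]
    rfl

def signedLength (j : ℕ) (u : List ℕ) : ℤ :=
  if u.head? = some j then u.length else -u.length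

def IsAltWord (j k : ℕ) (u : List ℕ) : Prop :=
  (∀ a ∈ u, a = j ∨ a = k) ∧ u.IsChain (· ≠ ·)

lemma IsAltWord.eq_altWord {j k : ℕ} (hjk : j ≠ k) {u : List ℕ} (hu : IsAltWord j k u) :
    u = altWord j k (signedLength j u) := by
  induction u with
  | nil => rfl
  | cons a u ih =>
    obtain ⟨hmem, hch⟩ := hu
    have hhead : ∀ b ∈ u.head?, a ≠ b := (List.isChain_cons.1 hch).1
    conv_lhs => rw [ih ⟨fun x hx => hmem x (List.mem_cons_of_mem a hx), hch.tail⟩]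
    rcases hmem a List.mem_cons_self with rfl | rfl
    · have hσ : signedLength a u = -u.length := if_neg fun h => hhead a h rfl
      rw [hσ, cons_altWord_of_nonpos a k (by omega)]
      simp [signedLength, add_comm]
    · have hσ : signedLength j u = u.length := by
        cases u with
        | nil => rfl
        | cons b u =>
          have hb := hmem b (by simp)
          have hab : a ≠ b := hhead b rfl
          simp only [signedLength, List.head?_cons, Option.some.injEq]
          rw [if_pos (by omega)]
      rw [hσ, cons_altWord_of_nonneg j a (by omega)]
      simp [signedLength, hjk.symm, sub_eq_add_neg]

lemma natAbs_signedLength (j : ℕ) (u : List ℕ) : (signedLength j u).natAbs = u.length := by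
  unfold signedLength; split <;> simp

end AlternatingWords

section Dihedral

def rot (n j k : ℕ) : UCox n := cS n j * cS n k

lemma rot_inv (n j k : ℕ) : (rot n j k)⁻¹ = cS n k * cS n j := by
  rw [rot, mul_inv_rev, cS_inv, cS_inv]

lemma cS_mul_rot_zpow (n j k : ℕ) (p : ℤ) :
    cS n j * rot n j k ^ p = rot n j k ^ (-p) * cS n j := by
  have hconj : MulAut.conj (cS n j) (rot n j k) = (rot n j k)⁻¹ := by
    rw [MulAut.conj_apply, cS_inv, rot_inv, rot, cS_mul_cS_mul]
  have h := map_zpow (MulAut.conj (cS n j)) (rot n j k) p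
  rw [hconj, inv_zpow', MulAut.conj_apply, cS_inv] at h
  rw [← h, mul_assoc, cS_mul_self, mul_one]

lemma wordProd_altWord_add_two (n j k : ℕ) (t : ℤ) :
    wordProd n (altWord j k (t + 2)) = rot n j k * wordProd n (altWord j k t) := by
  rcases (show 0 ≤ t ∨ t = -1 ∨ t ≤ -2 by omega) with ht | rfl | ht
  · rw [altWord_add_two_of_nonneg j k ht, wordProd_cons, wordProd_cons, rot, mul_assoc]
  · show cS n j * 1 = cS n j * cS n k * (cS n k * 1)
    rw [mul_assoc, cS_mul_cS_mul]
  · rw [altWord_of_le_neg_two j k ht, wordProd_cons, wordProd_cons, rot, mul_assoc,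
      cS_mul_cS_mul, cS_mul_cS_mul]

lemma wordProd_altWord_add_two_mul (n j k : ℕ) (t a : ℤ) :
    wordProd n (altWord j k (t + 2 * a)) = rot n j k ^ a * wordProd n (altWord j k t) := by
  induction a using Int.induction_on with
  | zero => simp
  | succ a ih =>
    rw [show t + 2 * (a + 1) = t + 2 * a + 2 by ring, wordProd_altWord_add_two, ih,
      ← mul_assoc, ← zpow_one_add, add_comm (1 : ℤ)]
  | pred a ih =>
    rw [show t + 2 * (-a) = t + 2 * (-a - 1) + 2 by ring, wordProd_altWord_add_two] at ih
    rw [← inv_mul_cancel_left (rot n j k) (wordProd n _), ih, ← mul_assoc, ← zpow_neg_one,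
      ← zpow_add, neg_add_eq_sub]

lemma wordProd_altWord_two_mul (n j k : ℕ) (p : ℤ) :
    wordProd n (altWord j k (2 * p)) = rot n j k ^ p := by
  simpa [altWord_zero, wordProd] using wordProd_altWord_add_two_mul n j k 0 p

lemma wordProd_altWord_two_mul_add_one (n j k : ℕ) (p : ℤ) :
    wordProd n (altWord j k (2 * p + 1)) = rot n j k ^ p * cS n j := by
  rw [add_comm, wordProd_altWord_add_two_mul]
  simp [altWord, altList, wordProd]

end Dihedral

section BandAction

variable {n j k : ℕ}

lemma band_succ (n j k : ℕ) (h : j < k) :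
    band n j (k + 1) = braidGen n k * band n j k * (braidGen n k)⁻¹ := by
  have hprod : ((List.range (k + 1 - 1 - j)).map (fun t => braidGen n (k + 1 - 1 - t))).prod =
      braidGen n k * ((List.range (k - 1 - j)).map (fun t => braidGen n (k - 1 - t))).prod := by
    rw [show k + 1 - 1 - j = k - 1 - j + 1 by omega, List.range_succ_eq_map, List.map_cons,
      List.prod_cons, List.map_map]
    congr 2
    exact List.map_congr_left fun t _ => by simp only [Function.comp_apply]; congr 1; omega
  rw [band, band, hprod]
  group

lemma hurwitzHom_braidGen_inv (n i : ℕ) (h₁ : 1 ≤ i) (h₂ : i + 1 ≤ n) :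
    hurwitzHom n (braidGen n i)⁻¹ = hAut n i h₁ h₂ := by
  rw [map_inv, hurwitzHom, braidGen, PresentedGroup.toGroup.of, bmap_in n i h₁ h₂, inv_inv]

lemma hAut_cS (n i : ℕ) (h₁ : 1 ≤ i) (h₂ : i + 1 ≤ n) (x : ℕ) :
    hAut n i h₁ h₂ (cS n x) = hmap n i x :=
  hEnd_cS n i h₁ h₂ x

noncomputable def bandAut (n j k : ℕ) : MulAut (UCox n) := hurwitzHom n (band n j k)⁻¹

lemma ract_band_zpow (n j k : ℕ) (m : ℤ) (y : UCox n) :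
    ract n y (band n j k ^ m) = (bandAut n j k ^ m) y := by
  rw [ract, ← inv_zpow, map_zpow]
  rfl

def bandImage (n j k x : ℕ) : UCox n :=
  if x = j then cS n j * cS n k * cS n j
  else if x = k then cS n j
  else if j < x ∧ x < k then cS n j * cS n k * cS n x * (cS n k * cS n j)
  else cS n x

lemma bandAut_cS (hj : 1 ≤ j) (hjk : j < k) (hk : k ≤ n) (x : ℕ) :
    bandAut n j k (cS n x) = bandImage n j k x := by
  induction k, hjk using Nat.le_induction generalizing x with
  | base =>
    have hband : band n j (j + 1) = braidGen n j := by simp [band]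
    rw [bandAut, hband, hurwitzHom_braidGen_inv n j hj hk, hAut_cS]
    unfold hmap bandImage
    split_ifs <;> first | rfl | omega
  | succ k hjk ih =>
    have hk₁ : 1 ≤ k := by omega
    have hconj : bandAut n j (k + 1) = (hAut n k hk₁ hk)⁻¹ * bandAut n j k * hAut n k hk₁ hk := by
      rw [bandAut, bandAut, band_succ n j k hjk, ← hurwitzHom_braidGen_inv n k hk₁ hk, ← map_inv,
        ← map_mul, ← map_mul]
      congr 1
      group
    have ih' := ih (by omega)
    rw [hconj, MulAut.mul_apply, MulAut.mul_apply, MulAut.inv_def, MulEquiv.symm_apply_eq,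
      hAut_cS]
    rcases (show x = k ∨ x = k + 1 ∨ x = j ∨ (j < x ∧ x < k) ∨
        (x ≠ j ∧ x ≠ k ∧ x ≠ k + 1 ∧ ¬ (j < x ∧ x < k + 1)) by omega) with
      rfl | rfl | rfl | hx | hx
    all_goals simp (disch := omega) only [hmap, bandImage, if_pos, if_neg, if_true, map_mul, ih',
      hAut_cS, mul_assoc, cS_mul_cS_mul]

def sepFlag (j k i : ℕ) : ℤ := if j < i ∧ i < k then 1 else 0

lemma bandAut_rot (hj : 1 ≤ j) (hjk : j < k) (hk : k ≤ n) :
    bandAut n j k (rot n j k) = rot n j k := by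
  rw [rot, map_mul, bandAut_cS hj hjk hk, bandAut_cS hj hjk hk]
  simp [bandImage, hjk.ne', mul_assoc, cS_mul_self]

lemma bandAut_rot_zpow_mul_cS (hj : 1 ≤ j) (hjk : j < k) (hk : k ≤ n) (p : ℤ) :
    bandAut n j k (rot n j k ^ p * cS n j) = rot n j k ^ (p + 1) * cS n j := by
  rw [map_mul, map_zpow, bandAut_rot hj hjk hk, bandAut_cS hj hjk hk]
  simp [bandImage, rot, zpow_add_one, mul_assoc]

lemma bandAut_cS_of_ne (hj : 1 ≤ j) (hjk : j < k) (hk : k ≤ n) {x : ℕ} (hxj : x ≠ j)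
    (hxk : x ≠ k) :
    bandAut n j k (cS n x) =
      rot n j k ^ sepFlag j k x * cS n x * rot n j k ^ (-sepFlag j k x) := by
  rw [bandAut_cS hj hjk hk, bandImage, if_neg hxj, if_neg hxk, sepFlag]
  split_ifs <;> simp [rot, cS_inv, mul_assoc]

lemma bandAut_zpow_rot_zpow (hj : 1 ≤ j) (hjk : j < k) (hk : k ≤ n) (m p : ℤ) :
    (bandAut n j k ^ m) (rot n j k ^ p) = rot n j k ^ p :=
  MulAut.zpow_apply_of_apply_eq (bandAut n j k) (fun _ => rot n j k ^ p)
    (fun _ => by rw [map_zpow, bandAut_rot hj hjk hk]) m 0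

lemma bandAut_zpow_rot_zpow_mul_cS (hj : 1 ≤ j) (hjk : j < k) (hk : k ≤ n) (m p : ℤ) :
    (bandAut n j k ^ m) (rot n j k ^ p * cS n j) = rot n j k ^ (p + m) * cS n j :=
  MulAut.zpow_apply_of_apply_eq (bandAut n j k) (fun p => rot n j k ^ p * cS n j)
    (bandAut_rot_zpow_mul_cS hj hjk hk) m p

lemma bandAut_zpow_cS_of_ne (hj : 1 ≤ j) (hjk : j < k) (hk : k ≤ n) (m : ℤ) {x : ℕ}
    (hxj : x ≠ j) (hxk : x ≠ k) :
    (bandAut n j k ^ m) (cS n x) =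
      rot n j k ^ (m * sepFlag j k x) * cS n x * rot n j k ^ (-(m * sepFlag j k x)) := by
  have h := MulAut.zpow_apply_of_apply_eq (bandAut n j k)
    (fun p => rot n j k ^ (p * sepFlag j k x) * cS n x * rot n j k ^ (-(p * sepFlag j k x)))
    (fun p => by
      simp only [map_mul, map_zpow, bandAut_rot hj hjk hk, bandAut_cS_of_ne hj hjk hk hxj hxk,
        ← mul_assoc, ← zpow_add]
      simp only [mul_assoc, ← zpow_add]
      ring_nf) m 0
  simpa using h

end BandAction

section Factors

variable {n j k : ℕ}

/-- Applying `bandAut ^ m` to a factor and absorbing the powers `rot ^ (-m e)`, `rot ^ (m d)`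
contributed by the adjacent separators sends `rot ^ p` to `rot ^ (p + m (d - e))` and
`rot ^ p * s_j` to `rot ^ (p + m (1 - e - d)) * s_j`: the parameter `t` of `altWord` moves by
`2 m * factorShift t e d`. -/
def factorShift (t e d : ℤ) : ℤ := if Even t then d - e else 1 - e - d

def newFactor (j k : ℕ) (m e d : ℤ) (u : List ℕ) : List ℕ :=
  altWord j k (signedLength j u + 2 * m * factorShift (signedLength j u) e d)

lemma wordProd_altWord_add_factorShift (hj : 1 ≤ j) (hjk : j < k) (hk : k ≤ n)
    (m e d t : ℤ) :
    wordProd n (altWord j k (t + 2 * m * factorShift t e d)) =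
      rot n j k ^ (-(m * e)) * (bandAut n j k ^ m) (wordProd n (altWord j k t)) *
        rot n j k ^ (m * d) := by
  obtain ⟨p, rfl | rfl⟩ := Int.even_or_odd' t
  · rw [factorShift, if_pos (even_two_mul p), show 2 * p + 2 * m * (d - e) =
      2 * (p + m * (d - e)) by ring, wordProd_altWord_two_mul, wordProd_altWord_two_mul,
      bandAut_zpow_rot_zpow hj hjk hk, ← zpow_add, ← zpow_add]
    ring_nf
  · rw [factorShift, if_neg (Int.not_even_two_mul_add_one p), show 2 * p + 1 + 2 * m * (1 - e - d)
      = 2 * (p + m * (1 - e - d)) + 1 by ring, wordProd_altWord_two_mul_add_one,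
      wordProd_altWord_two_mul_add_one, bandAut_zpow_rot_zpow_mul_cS hj hjk hk, mul_assoc,
      mul_assoc, cS_mul_rot_zpow, ← mul_assoc, ← mul_assoc, ← zpow_add, ← zpow_add]
    ring_nf

lemma wordProd_newFactor (hj : 1 ≤ j) (hjk : j < k) (hk : k ≤ n) (m e d : ℤ) {u : List ℕ}
    (hu : IsAltWord j k u) :
    wordProd n (newFactor j k m e d u) =
      rot n j k ^ (-(m * e)) * (bandAut n j k ^ m) (wordProd n u) * rot n j k ^ (m * d) := by
  conv_rhs => rw [hu.eq_altWord hjk.ne]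
  exact wordProd_altWord_add_factorShift hj hjk hk m e d _

end Factors

section Criticality

variable {j k : ℕ}

lemma length_newFactor (j k : ℕ) (m e d : ℤ) (u : List ℕ) :
    (newFactor j k m e d u).length =
      (signedLength j u + 2 * m * factorShift (signedLength j u) e d).natAbs :=
  length_altWord _ _ _

lemma isAltWord_newFactor (hjk : j ≠ k) (m e d : ℤ) (u : List ℕ) :
    IsAltWord j k (newFactor j k m e d u) :=
  ⟨fun _ => mem_altWord, isChain_altWord hjk _⟩

lemma eq_nil_of_newFactor_eq_nil {m e : ℤ} {u : List ℕ} (h : newFactor j k m e e u = []) :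
    u = [] := by
  have hlen := congr_arg List.length h
  rw [length_newFactor, List.length_nil, Int.natAbs_eq_zero, factorShift] at hlen
  rw [← List.length_eq_zero_iff, ← natAbs_signedLength j u]
  split_ifs at hlen with heven
  · simpa using hlen
  · exact absurd ⟨-(m * (1 - e - e)), by linarith⟩ heven

lemma even_signedLength_iff (j : ℕ) (u : List ℕ) : Even (signedLength j u) ↔ Even u.length := by
  rw [← Int.natAbs_even, natAbs_signedLength]

lemma natAbs_factorShift_of_criticalFactor {a b : ℕ} {u : List ℕ}
    (h : CriticalFactor j k a u b) :
    (factorShift (signedLength j u) (sepFlag j k a) (sepFlag j k b)).natAbs = 1 := by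
  rcases h with ⟨hodd, rfl⟩ | ⟨heven, -, -, -, -, -, hcross⟩
  · rw [factorShift, if_neg (by rw [even_signedLength_iff]; exact Nat.not_even_iff_odd.2 hodd),
      sepFlag]
    split_ifs <;> rfl
  · rw [factorShift, if_pos ((even_signedLength_iff j u).2 heven), sepFlag, sepFlag]
    split_ifs <;> simp_all

lemma criticalFactor_newFactor (m : ℤ) {a b : ℕ} {u : List ℕ} (h : CriticalFactor j k a u b) :
    CriticalFactor j k a (newFactor j k m (sepFlag j k a) (sepFlag j k b) u) b ∧
      2 * m.natAbs ≤ u.length + (newFactor j k m (sepFlag j k a) (sepFlag j k b) u).length := by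
  have hparity : Even (newFactor j k m (sepFlag j k a) (sepFlag j k b) u).length ↔
      Even u.length := by
    rw [length_newFactor, Int.natAbs_even, ← even_signedLength_iff j u, mul_assoc,
      Int.even_add, iff_true_intro (even_two_mul _), iff_true]
  refine ⟨?_, ?_⟩
  · simp only [CriticalFactor, ← Nat.not_even_iff_odd, hparity] at h ⊢
    exact h
  · rw [length_newFactor, ← natAbs_signedLength j u]
    rcases Int.natAbs_eq_iff.1 (natAbs_factorShift_of_criticalFactor h) with hc | hc <;>
      rw [hc] <;> omega

end Criticality

section Tails

variable {n j k : ℕ}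

def IsJKTail (j k : ℕ) (tail : List (ℕ × List ℕ)) : Prop :=
  ∀ p ∈ tail, (p.1 ≠ j ∧ p.1 ≠ k) ∧ ∀ a ∈ p.2, a = j ∨ a = k

def nextFlag (j k : ℕ) : List (ℕ × List ℕ) → ℤ
  | [] => 0
  | (i, _) :: _ => sepFlag j k i

def transformTail (j k : ℕ) (m : ℤ) : List (ℕ × List ℕ) → List (ℕ × List ℕ)
  | [] => []
  | (i, u) :: rest => (i, newFactor j k m (sepFlag j k i) (nextFlag j k rest) u) ::
      transformTail j k m rest

lemma map_fst_transformTail (j k : ℕ) (m : ℤ) (tail : List (ℕ × List ℕ)) :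
    (transformTail j k m tail).map Prod.fst = tail.map Prod.fst := by
  induction tail with
  | nil => rfl
  | cons p rest ih => simp [transformTail, ih]

lemma fst_getD_transformTail (m : ℤ) (tail : List (ℕ × List ℕ)) (t : ℕ) :
    ((transformTail j k m tail).getD t (0, [])).1 = (tail.getD t (0, [])).1 := by
  rw [← List.getD_map _ _ Prod.fst, map_fst_transformTail, List.getD_map]

lemma snd_getD_transformTail (m : ℤ) {tail : List (ℕ × List ℕ)} {t : ℕ}
    (ht : t + 1 < tail.length) :
    ((transformTail j k m tail).getD t (0, [])).2 =
      newFactor j k m (sepFlag j k (tail.getD t (0, [])).1)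
        (sepFlag j k (tail.getD (t + 1) (0, [])).1) (tail.getD t (0, [])).2 := by
  induction tail generalizing t with
  | nil => simp at ht
  | cons p rest ih =>
    obtain ⟨i, u⟩ := p
    cases t with
    | zero =>
      obtain _ | ⟨⟨i', u'⟩, rest⟩ := rest
      · simp at ht
      · rfl
    | succ t =>
      simp only [transformTail, List.getD_cons_succ]
      exact ih (by simpa using ht)

lemma mem_glue {a : ℕ} {u₀ : List ℕ} {tail : List (ℕ × List ℕ)} :
    a ∈ glue u₀ tail ↔ a ∈ u₀ ∨ ∃ p ∈ tail, a = p.1 ∨ a ∈ p.2 := by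
  induction tail generalizing u₀ with
  | nil => simp [glue]
  | cons p rest ih =>
    obtain ⟨i, u⟩ := p
    simp only [glue, List.mem_append, List.mem_cons, ih, or_and_right, exists_or, exists_eq_left,
      or_assoc]

lemma head?_glue (u₀ : List ℕ) (tail : List (ℕ × List ℕ)) :
    (glue u₀ tail).head? = if u₀ = [] then tail.head?.map Prod.fst else u₀.head? := by
  cases tail with
  | nil => cases u₀ <;> rfl
  | cons p rest => obtain ⟨i, u⟩ := p; cases u₀ <;> rfl

lemma isChain_glue_iff {u₀ : List ℕ} {tail : List (ℕ × List ℕ)} (hu₀ : ∀ a ∈ u₀, a = j ∨ a = k)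
    (htail : IsJKTail j k tail) :
    (glue u₀ tail).IsChain (· ≠ ·) ↔ u₀.IsChain (· ≠ ·) ∧ (∀ p ∈ tail, p.2.IsChain (· ≠ ·)) ∧
      tail.IsChain (fun p q => p.2 = [] → p.1 ≠ q.1) := by
  induction tail generalizing u₀ with
  | nil => simp [glue]
  | cons p rest ih =>
    obtain ⟨i, u⟩ := p
    obtain ⟨⟨hij, hik⟩, hu⟩ := htail (i, u) List.mem_cons_self
    have hrest := fun p hp => htail p (List.mem_cons_of_mem _ hp)
    have hbdry : ∀ x ∈ u₀.getLast?, ∀ y ∈ (i :: glue u rest).head?, x ≠ y := by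
      rintro x hx y ⟨⟩ rfl
      rcases hu₀ x (List.mem_of_mem_getLast? hx) with rfl | rfl
      exacts [hij rfl, hik rfl]
    have hhead : (∀ y ∈ (glue u rest).head?, i ≠ y) ↔
        ∀ q ∈ rest.head?, u = [] → i ≠ q.1 := by
      rw [head?_glue]
      obtain _ | ⟨c, u⟩ := u
      · simp
      · rcases hu c List.mem_cons_self with rfl | rfl <;> simp_all
    simp only [glue, List.isChain_append, List.isChain_cons (l := glue u rest), ih hu hrest,
      List.isChain_cons (x := (i, u)), hhead, List.forall_mem_cons, iff_true_intro hbdry]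
    tauto

lemma isChain_transformTail (m : ℤ) {tail : List (ℕ × List ℕ)}
    (h : tail.IsChain (fun p q => p.2 = [] → p.1 ≠ q.1)) :
    (transformTail j k m tail).IsChain (fun p q => p.2 = [] → p.1 ≠ q.1) := by
  induction tail with
  | nil => exact List.isChain_nil
  | cons p rest ih =>
    obtain ⟨i, u⟩ := p
    refine List.isChain_cons.2 ⟨?_, ih h.tail⟩
    obtain _ | ⟨⟨i', u'⟩, rest⟩ := rest
    · simp [transformTail]
    · rintro _ ⟨⟩ hnil
      by_cases hflag : sepFlag j k i = sepFlag j k i'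
      · rw [nextFlag, ← hflag] at hnil
        exact (List.isChain_cons_cons.1 h).1 (eq_nil_of_newFactor_eq_nil hnil)
      · exact fun hii' => hflag (congr_arg (sepFlag j k) hii')

lemma mem_transformTail (hjk : j ≠ k) (m : ℤ) {tail : List (ℕ × List ℕ)} {p : ℕ × List ℕ}
    (hp : p ∈ transformTail j k m tail) : p.1 ∈ tail.map Prod.fst ∧ IsAltWord j k p.2 := by
  refine ⟨map_fst_transformTail j k m tail ▸ List.mem_map_of_mem hp, ?_⟩
  induction tail with
  | nil => simp [transformTail] at hp
  | cons q rest ih =>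
    obtain ⟨i, u⟩ := q
    rcases List.mem_cons.1 hp with rfl | hp
    exacts [isAltWord_newFactor hjk _ _ _ _, ih hp]

lemma wordProd_glue_transformTail (hj : 1 ≤ j) (hjk : j < k) (hk : k ≤ n) (m : ℤ)
    {tail : List (ℕ × List ℕ)}
    (htail : ∀ p ∈ tail, (p.1 ≠ j ∧ p.1 ≠ k) ∧ IsAltWord j k p.2) {u₀ : List ℕ}
    (hu₀ : IsAltWord j k u₀) (e : ℤ) :
    wordProd n (glue (newFactor j k m e (nextFlag j k tail) u₀) (transformTail j k m tail)) =
      rot n j k ^ (-(m * e)) * (bandAut n j k ^ m) (wordProd n (glue u₀ tail)) := by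
  induction tail generalizing u₀ e with
  | nil =>
    rw [glue, transformTail, glue, nextFlag, wordProd_newFactor hj hjk hk m e 0 hu₀]
    simp
  | cons p rest ih =>
    obtain ⟨i, u⟩ := p
    obtain ⟨⟨hij, hik⟩, hu⟩ := htail (i, u) List.mem_cons_self
    rw [transformTail, nextFlag, glue, glue, wordProd_append, wordProd_cons,
      ih (fun p hp => htail p (List.mem_cons_of_mem _ hp)) hu,
      wordProd_newFactor hj hjk hk _ _ _ hu₀, wordProd_append, wordProd_cons, map_mul, map_mul, bandAut_zpow_cS_of_ne hj hjk hk m hij hik]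
    group

lemma IsJKTail.transformTail (hjk : j ≠ k) (m : ℤ) {tail : List (ℕ × List ℕ)}
    (htail : IsJKTail j k tail) : IsJKTail j k (transformTail j k m tail) := by
  intro p hp
  obtain ⟨hsep, halt, -⟩ := mem_transformTail hjk m hp
  obtain ⟨q, hq, hqp⟩ := List.mem_map.1 hsep
  exact ⟨hqp ▸ (htail q hq).1, halt⟩

lemma isRedWord_glue_transformTail (hj : 1 ≤ j) (hjk : j < k) (hk : k ≤ n) (m e : ℤ)
    {u₀ : List ℕ} {tail : List (ℕ × List ℕ)} (hred : IsRedWord n (glue u₀ tail))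
    (hu₀ : ∀ a ∈ u₀, a = j ∨ a = k) (htail : IsJKTail j k tail) :
    IsRedWord n (glue (newFactor j k m e (nextFlag j k tail) u₀) (transformTail j k m tail)) := by
  have hrange : ∀ a, a = j ∨ a = k → 1 ≤ a ∧ a ≤ n := by omega
  obtain ⟨-, -, hsep⟩ := (isChain_glue_iff hu₀ htail).1 hred.2
  obtain ⟨hnew, hnew'⟩ := isAltWord_newFactor hjk.ne m e (nextFlag j k tail) u₀
  refine ⟨fun a ha => ?_, (isChain_glue_iff hnew (htail.transformTail hjk.ne m)).2
    ⟨hnew', fun p hp => (mem_transformTail hjk.ne m hp).2.2, isChain_transformTail m hsep⟩⟩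
  rcases mem_glue.1 ha with ha | ⟨p, hp, rfl | ha⟩
  · exact hrange a (hnew a ha)
  · obtain ⟨q, hq, hqp⟩ := List.mem_map.1 (mem_transformTail hjk.ne m hp).1
    exact hred.1 _ (mem_glue.2 (Or.inr ⟨q, hq, Or.inl hqp.symm⟩))
  · exact hrange a ((mem_transformTail hjk.ne m hp).2.1 a ha)

end Tails

theorem stmt2_general (n j k : ℕ) (m : ℤ) (hj : 1 ≤ j) (hjk : j < k) (hk : k ≤ n)
    (w w0 : List ℕ) (tail : List (ℕ × List ℕ))
    (hred : IsRedWord n w) (hfact : IsJKFact j k w w0 tail)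
    (w' : List ℕ) (hred' : IsRedWord n w')
    (hw' : wordProd n w' = ract n (wordProd n w) (band n j k ^ m)) :
    ∃ (w0' : List ℕ) (tail' : List (ℕ × List ℕ)),
      IsJKFact j k w' w0' tail' ∧
      tail'.map Prod.fst = tail.map Prod.fst ∧
      ∀ t : ℕ, t + 1 < tail.length →
        CriticalFactor j k (tail.getD t (0, [])).1 (tail.getD t (0, [])).2
            (tail.getD (t+1) (0, [])).1 →
          CriticalFactor j k (tail'.getD t (0, [])).1 (tail'.getD t (0, [])).2
              (tail'.getD (t+1) (0, [])).1 ∧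
          2 * m.natAbs ≤ (tail.getD t (0, [])).2.length +
            (tail'.getD t (0, [])).2.length := by
  obtain ⟨rfl, hw0, htail⟩ := hfact
  obtain ⟨hw0c, hfac, -⟩ := (isChain_glue_iff hw0 htail).1 hred.2
  have hprod : wordProd n (glue (newFactor j k m 0 (nextFlag j k tail) w0)
      (transformTail j k m tail)) = wordProd n w' := by
    rw [hw', ract_band_zpow, wordProd_glue_transformTail hj hjk hk m
      (fun p hp => ⟨(htail p hp).1, (htail p hp).2, hfac p hp⟩) ⟨hw0, hw0c⟩ 0]
    simp
  refine ⟨_, _, ⟨(hred'.eq_of_wordProd_eq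
      (isRedWord_glue_transformTail hj hjk hk m 0 hred hw0 htail) hprod.symm),
    (isAltWord_newFactor hjk.ne _ _ _ _).1, IsJKTail.transformTail hjk.ne m htail⟩,
    map_fst_transformTail j k m tail, fun t ht hcrit => ?_⟩
  rw [fst_getD_transformTail, fst_getD_transformTail, snd_getD_transformTail m ht]
  exact criticalFactor_newFactor m hcrit

theorem stmt2 (n j k : ℕ) (m : ℤ) (hj : 1 ≤ j) (hjk : j < k) (hk : k ≤ n) (hm : m ≠ 0)
    (w w0 : List ℕ) (tail : List (ℕ × List ℕ))
    (hred : IsRedWord n w) (hfact : IsJKFact j k w w0 tail)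
    (hlen0 : w0.length ≠ 2 * m.natAbs)
    (hlen : ∀ p ∈ tail, p.2.length ≠ 2 * m.natAbs)
    (w' : List ℕ) (hred' : IsRedWord n w')
    (hw' : wordProd n w' = ract n (wordProd n w) (band n j k ^ m)) :
    ∃ (w0' : List ℕ) (tail' : List (ℕ × List ℕ)),
      IsJKFact j k w' w0' tail' ∧
      tail'.map Prod.fst = tail.map Prod.fst ∧
      ∀ t : ℕ, t + 1 < tail.length →
        CriticalFactor j k (tail.getD t (0, [])).1 (tail.getD t (0, [])).2
            (tail.getD (t+1) (0, [])).1 →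
          CriticalFactor j k (tail'.getD t (0, [])).1 (tail'.getD t (0, [])).2
              (tail'.getD (t+1) (0, [])).1 ∧
          2 * m.natAbs ≤ (tail.getD t (0, [])).2.length +
            (tail'.getD t (0, [])).2.length :=
  stmt2_general n j k m hj hjk hk w w0 tail hred hfact w' hred' hw'
end

section
/- Let M = (m_{ij}) be a symmetric matrix with entries m_{ij} ∈ {1,2} for i ≠ j such that m_{ik} = 1 whenever m_{ij} = 1 and m_{jk} = 1. Define the equivalence relation i ∼ j on {1,…,n} by i ∼ j if and only if i = j or m_{ij} = 1, and let S_{n,P} ≤ S_n be the subgroup generated by the transpositions (i j) with i ∼ j. Let π : Br_n → S_n be the homomorphism with π(σ_i) = (i, i+1), and let PBr_n = ker π be the pure braid group. Then PBr_n ⊆ E_M and π(E_M) = S_{n,P}; in other words, there is a short exact sequence 1 → PBr_n → E_M → S_{n,P} → 1. -/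
/-!
Let `P ≤ Br_n` be generated by the squares `a_{ij}^2`. Conjugating `a_{ij}^2` by a generator `σ_x`
gives either a band square or a band square conjugated by `σ_x^2`, so `P` is normal. In `Br_n ⧸ P`
every `σ_x` is an involution, and right multiplication by `σ_i` sends the class of the canonical
lift of `w` (through the normal form `∏ σ_{m-1} ⋯ σ_k` of permutations) to that of `w (i i+1)`;
hence every braid is congruent modulo `P` to the canonical lift of its permutation, and
`ker π ≤ P`. As `m_{ij} ∈ {1, 2}`, `P ≤ E_M`, and `π (a_{ij}^{m_{ij}}) = (i j)^{m_{ij}}`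
identifies `π(E_M)`.
-/

open Equiv

theorem Subgroup.closure_normal_of_conj_mem {G : Type*} [Group G] {S T : Set G}
    (hT : Subgroup.closure T = ⊤) (hsq : ∀ t ∈ T, t ^ 2 ∈ Subgroup.closure S)
    (hconj : ∀ t ∈ T, ∀ s ∈ S, t * s * t⁻¹ ∈ Subgroup.closure S) :
    (Subgroup.closure S).Normal := by
  set H := Subgroup.closure S
  have hfwd : ∀ t ∈ T, ∀ h ∈ H, t * h * t⁻¹ ∈ H := fun t ht h hh => by
    have hmap : H.map (MulAut.conj t).toMonoidHom ≤ H := by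
      rw [MonoidHom.map_closure, Subgroup.closure_le]
      rintro _ ⟨s, hs, rfl⟩
      exact hconj t ht s hs
    exact hmap ⟨h, hh, rfl⟩
  rw [← Subgroup.normalizer_eq_top_iff, eq_top_iff, ← hT, Subgroup.closure_le]
  refine fun t ht => Subgroup.mem_normalizer_iff.mpr fun h => ⟨hfwd t ht h, fun hh => ?_⟩
  have hconj_sq : (t ^ 2)⁻¹ * (t * (t * h * t⁻¹) * t⁻¹) * t ^ 2 ∈ H :=
    mul_mem (mul_mem (inv_mem (hsq t ht)) (hfwd t ht _ hh)) (hsq t ht)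
  simpa [pow_two, mul_assoc] using hconj_sq

theorem Subgroup.conj_pow_mem_of_conj_eq {G : Type*} [Group G] {H : Subgroup G} {g a u b : G}
    {k : ℕ} (h : g * a * g⁻¹ = u * b * u⁻¹) (hu : u ∈ H) (hb : b ^ k ∈ H) :
    g * a ^ k * g⁻¹ ∈ H := by
  rw [← conj_pow, h, conj_pow]
  exact mul_mem (mul_mem hu hb) (inv_mem hu)

namespace Equiv.Perm

variable {α : Type*} {s : Set α} {w : Perm α}

theorem apply_mem_of_mem_fixingSubgroup_compl (hw : w ∈ fixingSubgroup (Perm α) sᶜ) {y : α}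
    (hy : y ∈ s) : w y ∈ s := by
  by_contra h
  have hfix : w (w y) = w y := (mem_fixingSubgroup_iff _).mp hw _ h
  exact h (by rwa [w.injective hfix])

theorem swap_mem_fixingSubgroup_compl [DecidableEq α] {x y : α} (hx : x ∈ s) (hy : y ∈ s) :
    swap x y ∈ fixingSubgroup (Perm α) sᶜ :=
  (mem_fixingSubgroup_iff _).mpr fun _ hz =>
    swap_apply_of_ne_of_ne (by rintro rfl; exact hz hx) (by rintro rfl; exact hz hy)

theorem mem_fixingSubgroup_compl_of_insert {a : α} (hw : w ∈ fixingSubgroup (Perm α) (insert a s)ᶜ)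
    (ha : w a = a) : w ∈ fixingSubgroup (Perm α) sᶜ := by
  refine (mem_fixingSubgroup_iff _).mpr fun x hx => ?_
  by_cases hxa : x = a
  · exact hxa ▸ ha
  · exact (mem_fixingSubgroup_iff _).mp hw x (by simp_all)

end Equiv.Perm

namespace BraidGroup

variable {n : ℕ}

theorem braidGen_eq_one {i : ℕ} (h : i = 0 ∨ n ≤ i) : braidGen n i = 1 :=
  PresentedGroup.one_of_mem (Or.inr (Or.inr ⟨i, h, rfl⟩))

theorem braidGen_mul_braidGen_mul_braidGen {i : ℕ} (h1 : 1 ≤ i) (h2 : i + 2 ≤ n) :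
    braidGen n i * braidGen n (i + 1) * braidGen n i
      = braidGen n (i + 1) * braidGen n i * braidGen n (i + 1) :=
  PresentedGroup.mk_eq_mk_of_mul_inv_mem (Or.inl ⟨i, h1, h2, rfl⟩)

theorem commute_braidGen {i j : ℕ} (h : i + 2 ≤ j) : Commute (braidGen n i) (braidGen n j) := by
  rcases Nat.eq_zero_or_pos i with rfl | hi
  · simp [braidGen_eq_one (n := n) (Or.inl rfl)]
  rcases le_or_gt n j with hj | hj
  · simp [braidGen_eq_one (n := n) (Or.inr hj)]
  exact PresentedGroup.mk_eq_mk_of_mul_inv_mem (Or.inr (Or.inl ⟨i, j, hi, h, hj, rfl⟩))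

variable (n) in
/-- `σ_{m-1} σ_{m-2} ⋯ σ_k`, empty when `m ≤ k`. -/
def descProd (k m : ℕ) : BraidGroup n :=
  ((List.range (m - k)).map fun t => braidGen n (m - 1 - t)).prod

theorem descProd_of_le {k m : ℕ} (h : m ≤ k) : descProd n k m = 1 := by
  simp [descProd, Nat.sub_eq_zero_of_le h]

theorem descProd_succ {k m : ℕ} (h : k ≤ m) :
    descProd n k (m + 1) = braidGen n m * descProd n k m := by
  rw [descProd, show m + 1 - k = m - k + 1 by omega, List.range_succ_eq_map, List.map_cons,
    List.map_map, List.prod_cons, descProd]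
  congr 2
  exact List.map_congr_left fun t _ => by simp only [Function.comp_apply]; congr 1; omega

theorem descProd_mul_descProd {k i m : ℕ} (hki : k ≤ i) (him : i ≤ m) :
    descProd n i m * descProd n k i = descProd n k m := by
  induction m, him using Nat.le_induction with
  | base => rw [descProd_of_le le_rfl, one_mul]
  | succ m hm ih => rw [descProd_succ hm, descProd_succ (hki.trans hm), mul_assoc, ih]

theorem descProd_eq_mul_braidGen {k m : ℕ} (h : k < m) :
    descProd n k m = descProd n (k + 1) m * braidGen n k := by
  rw [← descProd_mul_descProd (Nat.le_succ k) h, descProd_succ le_rfl, descProd_of_le le_rfl,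
    mul_one]

theorem commute_descProd_of_add_two_le {x k m : ℕ} (h : x + 2 ≤ k) :
    Commute (braidGen n x) (descProd n k m) :=
  Commute.list_prod_right _ _ fun _ hy => by
    obtain ⟨t, ht, rfl⟩ := List.mem_map.mp hy
    exact commute_braidGen (by simp at ht; omega)

theorem commute_descProd_of_succ_le {x k m : ℕ} (h : m + 1 ≤ x) :
    Commute (braidGen n x) (descProd n k m) :=
  Commute.list_prod_right _ _ fun _ hy => by
    obtain ⟨t, ht, rfl⟩ := List.mem_map.mp hy
    exact (commute_braidGen (by simp at ht; omega)).symm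

theorem descProd_mul_braidGen_succ {k i m : ℕ} (hk : 1 ≤ k) (hki : k ≤ i) (him : i + 2 ≤ m)
    (hmn : m ≤ n) :
    descProd n k m * braidGen n (i + 1) = braidGen n i * descProd n k m := by
  have hsplit : descProd n k m =
      descProd n (i + 2) m * (braidGen n (i + 1) * braidGen n i) * descProd n k i := by
    rw [← descProd_mul_descProd (by omega : k ≤ i + 2) him, ← descProd_mul_descProd hki (by omega),
      descProd_succ (by omega), descProd_succ le_rfl, descProd_of_le le_rfl]
    group
  have hlow : Commute (braidGen n (i + 1)) (descProd n k i) :=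
    commute_descProd_of_succ_le (by omega)
  have hhigh : Commute (braidGen n i) (descProd n (i + 2) m) :=
    commute_descProd_of_add_two_le le_rfl
  have hbraid := braidGen_mul_braidGen_mul_braidGen (n := n) (by omega : 1 ≤ i) (by omega)
  rw [hsplit, mul_assoc, ← hlow.eq, ← mul_assoc, mul_assoc _ _ (braidGen n (i + 1)), ← hbraid,
    ← mul_assoc, ← mul_assoc, ← hhigh.eq]
  group

theorem band_eq (i j : ℕ) :
    band n i j = descProd n (i + 1) j * braidGen n i * (descProd n (i + 1) j)⁻¹ := by
  rw [band, descProd, show j - (i + 1) = j - 1 - i by omega]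

theorem band_succ_right {i j : ℕ} (h : i ≤ j) :
    band n i (j + 1) = braidGen n j * band n i j * (braidGen n j)⁻¹ := by
  rcases h.eq_or_lt with rfl | hlt
  · simp [band_eq, descProd_of_le]
  · rw [band_eq, band_eq, descProd_succ hlt]
    group

theorem band_self_succ (i : ℕ) : band n i (i + 1) = braidGen n i := by
  simp [band_eq, descProd_of_le]

theorem commute_band_of_add_two_le {x i j : ℕ} (h : x + 2 ≤ i) :
    Commute (braidGen n x) (band n i j) := by
  rw [band_eq]
  have hD : Commute (braidGen n x) (descProd n (i + 1) j) :=
    commute_descProd_of_add_two_le (by omega)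
  exact (hD.mul_right (commute_braidGen h)).mul_right hD.inv_right

theorem commute_band_of_succ_le {x i j : ℕ} (hij : i < j) (h : j + 1 ≤ x) :
    Commute (braidGen n x) (band n i j) := by
  rw [band_eq]
  have hD : Commute (braidGen n x) (descProd n (i + 1) j) := commute_descProd_of_succ_le h
  exact (hD.mul_right (commute_braidGen (by omega)).symm).mul_right hD.inv_right

theorem commute_band_of_lt_of_add_two_le {x i j : ℕ} (hi : 1 ≤ i) (hix : i < x) (hxj : x + 2 ≤ j)
    (hjn : j ≤ n) : Commute (braidGen n x) (band n i j) := by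
  induction j, hxj using Nat.le_induction with
  | base =>
    have hb : Commute (braidGen n (x + 1)) (band n i x) := commute_band_of_succ_le hix le_rfl
    have hbraid := braidGen_mul_braidGen_mul_braidGen (n := n) (by omega : 1 ≤ x) hjn
    rw [band_succ_right (by omega), band_succ_right hix.le, Commute, SemiconjBy]
    set a := braidGen n x
    set b := braidGen n (x + 1)
    set c := band n i x
    calc a * (b * (a * c * a⁻¹) * b⁻¹)
        = (a * b * a) * c * (a * b * a)⁻¹ * a := by group
      _ = b * a * (b * c * b⁻¹) * (b * a)⁻¹ * a := by rw [hbraid]; group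
      _ = b * (a * c * a⁻¹) * b⁻¹ * a := by rw [hb.eq]; group
  | succ j hj ih =>
    rw [band_succ_right (by omega)]
    have hxj : Commute (braidGen n x) (braidGen n j) := commute_braidGen hj
    exact (hxj.mul_right (ih (by omega))).mul_right hxj.inv_right

theorem braidGen_mul_band_mul_inv {i j : ℕ} (hi : 1 ≤ i) (hij : i + 2 ≤ j) (hjn : j ≤ n) :
    braidGen n i * band n i j * (braidGen n i)⁻¹ = band n (i + 1) j := by
  induction j, hij using Nat.le_induction with
  | base =>
    rw [band_succ_right (by omega), band_self_succ, band_self_succ]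
    have hbraid := braidGen_mul_braidGen_mul_braidGen (n := n) hi hjn
    calc braidGen n i * (braidGen n (i + 1) * braidGen n i * (braidGen n (i + 1))⁻¹) *
          (braidGen n i)⁻¹
        = (braidGen n i * braidGen n (i + 1) * braidGen n i) *
            (braidGen n i * braidGen n (i + 1))⁻¹ := by group
      _ = braidGen n (i + 1) := by rw [hbraid]; group
  | succ j hj ih =>
    have hij : Commute (braidGen n i) (braidGen n j) := commute_braidGen hj
    rw [band_succ_right (by omega), band_succ_right (by omega), ← ih (by omega)]
    calc _ = (braidGen n i * braidGen n j) * band n i j * (braidGen n i * braidGen n j)⁻¹ := by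
          group
      _ = _ := by rw [hij.eq]; group

/-- `E_M` for the matrix with all entries `2`; it is the pure braid group. -/
abbrev pureBandSubgroup (n : ℕ) : Subgroup (BraidGroup n) := bandSubgroup n fun _ _ => 2

theorem band_sq_mem {i j : ℕ} (hi : 1 ≤ i) (hij : i < j) (hjn : j ≤ n) :
    band n i j ^ 2 ∈ pureBandSubgroup n :=
  Subgroup.subset_closure ⟨i, j, hi, hij, hjn, rfl⟩

theorem braidGen_sq_mem (x : ℕ) : braidGen n x ^ 2 ∈ pureBandSubgroup n := by
  by_cases hx : 1 ≤ x ∧ x + 1 ≤ n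
  · rw [← band_self_succ]
    exact band_sq_mem hx.1 x.lt_succ_self hx.2
  · rw [braidGen_eq_one (by omega), one_pow]
    exact one_mem _

theorem braidGen_mul_band_sq_mul_inv_mem {x i j : ℕ} (hx : 1 ≤ x) (hxn : x + 1 ≤ n) (hi : 1 ≤ i)
    (hij : i < j) (hjn : j ≤ n) :
    braidGen n x * band n i j ^ 2 * (braidGen n x)⁻¹ ∈ pureBandSubgroup n := by
  have of_commute (hc : Commute (braidGen n x) (band n i j)) :
      braidGen n x * band n i j ^ 2 * (braidGen n x)⁻¹ ∈ pureBandSubgroup n :=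
    Subgroup.conj_pow_mem_of_conj_eq (u := 1) (by simp [hc.eq]) (one_mem _)
      (band_sq_mem hi hij hjn)
  rcases lt_trichotomy (x + 1) i with h | rfl | h
  · exact of_commute (commute_band_of_add_two_le h)
  · refine Subgroup.conj_pow_mem_of_conj_eq (u := braidGen n x ^ 2) (b := band n x j) ?_
      (braidGen_sq_mem x) (band_sq_mem hx (by omega) hjn)
    rw [← braidGen_mul_band_mul_inv hx (by omega) hjn, pow_two]
    group
  rcases (show i ≤ x by omega).eq_or_lt with rfl | hix
  · rcases (show i + 1 ≤ j by omega).eq_or_lt with rfl | hj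
    · exact of_commute (by rw [band_self_succ])
    · exact Subgroup.conj_pow_mem_of_conj_eq (u := 1)
        (by rw [braidGen_mul_band_mul_inv hi hj hjn]; group) (one_mem _)
        (band_sq_mem (by omega) hj hjn)
  rcases lt_trichotomy (x + 1) j with h | rfl | h
  · exact of_commute (commute_band_of_lt_of_add_two_le hi hix h hjn)
  · refine Subgroup.conj_pow_mem_of_conj_eq (u := braidGen n x ^ 2) (b := band n i x) ?_
      (braidGen_sq_mem x) (band_sq_mem hi hix (by omega))
    rw [band_succ_right hix.le, pow_two]
    group
  rcases (show j ≤ x by omega).eq_or_lt with rfl | hjx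
  · exact Subgroup.conj_pow_mem_of_conj_eq (u := 1)
      (by rw [← band_succ_right hij.le]; group) (one_mem _) (band_sq_mem hi (by omega) hxn)
  · exact of_commute (commute_band_of_succ_le hij hjx)

instance : (pureBandSubgroup n).Normal := by
  refine Subgroup.closure_normal_of_conj_mem (PresentedGroup.closure_range_of _)
    (by rintro _ ⟨x, rfl⟩; exact braidGen_sq_mem x) ?_
  rintro _ ⟨x, rfl⟩ _ ⟨i, j, hi, hij, hjn, rfl⟩
  by_cases hx : 1 ≤ x ∧ x + 1 ≤ n
  · exact braidGen_mul_band_sq_mul_inv_mem hx.1 hx.2 hi hij hjn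
  · change braidGen n x * band n i j ^ 2 * (braidGen n x)⁻¹ ∈ _
    rw [braidGen_eq_one (by omega), one_mul, inv_one, mul_one]
    exact band_sq_mem hi hij hjn

variable (n) in
def braidGenPerm (x : ℕ) : Perm ℕ := if 1 ≤ x ∧ x + 1 ≤ n then swap x (x + 1) else 1

theorem swap_succ_braid (i : ℕ) :
    swap i (i + 1) * swap (i + 1) (i + 2) * swap i (i + 1)
      = swap (i + 1) (i + 2) * swap i (i + 1) * swap (i + 1) (i + 2) := by
  ext x
  simp only [Perm.mul_apply, swap_apply_def]
  split_ifs <;> omega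

theorem commute_swap_succ {i j : ℕ} (h : i + 2 ≤ j) :
    Commute (swap i (i + 1)) (swap j (j + 1)) := by
  ext x
  simp only [Perm.mul_apply, swap_apply_def]
  split_ifs <;> omega

theorem braidGenPerm_rels : ∀ r ∈ braidRels n, FreeGroup.lift (braidGenPerm n) r = 1 := by
  rintro r (⟨i, h1, h2, rfl⟩ | ⟨i, j, h1, h2, h3, rfl⟩ | ⟨i, hi, rfl⟩) <;>
    simp only [map_mul, map_inv, FreeGroup.lift_apply_of, mul_inv_eq_one, braidGenPerm]
  · rw [if_pos ⟨h1, by omega⟩, if_pos ⟨by omega, by omega⟩]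
    exact swap_succ_braid i
  · rw [if_pos ⟨h1, by omega⟩, if_pos ⟨by omega, by omega⟩]
    exact commute_swap_succ h2
  · rw [if_neg (by omega)]

variable (n) in
def toPerm : BraidGroup n →* Perm ℕ := PresentedGroup.toGroup braidGenPerm_rels

theorem toPerm_braidGen (x : ℕ) : toPerm n (braidGen n x) = braidGenPerm n x :=
  PresentedGroup.toGroup.of braidGenPerm_rels

theorem toPerm_braidGen_of_le {x : ℕ} (h1 : 1 ≤ x) (h2 : x + 1 ≤ n) :
    toPerm n (braidGen n x) = swap x (x + 1) := by
  rw [toPerm_braidGen, braidGenPerm, if_pos ⟨h1, h2⟩]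

theorem toPerm_braidGen_inv (x : ℕ) : toPerm n (braidGen n x)⁻¹ = toPerm n (braidGen n x) := by
  rw [map_inv, toPerm_braidGen, braidGenPerm]
  split_ifs <;> simp [swap_inv]

theorem toPerm_band {i j : ℕ} (hi : 1 ≤ i) (hij : i < j) (hjn : j ≤ n) :
    toPerm n (band n i j) = swap i j := by
  induction j, hij using Nat.le_induction with
  | base => rw [band_self_succ, toPerm_braidGen_of_le hi hjn]
  | succ j hj ih =>
    rw [band_succ_right (by omega), map_mul, map_mul, map_inv, toPerm_braidGen_of_le (by omega) hjn,
      ih (by omega), ← swap_apply_apply, swap_apply_of_ne_of_ne (by omega) (by omega),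
      swap_apply_left]

theorem braidGenPerm_mem_fixingSubgroup {m x : ℕ} (h : x < m ∨ n ≤ m) :
    braidGenPerm n x ∈ fixingSubgroup (Perm ℕ) (Set.Icc 1 m)ᶜ := by
  unfold braidGenPerm
  split_ifs
  · exact Perm.swap_mem_fixingSubgroup_compl (by simp; omega) (by simp; omega)
  · exact one_mem _

theorem toPerm_descProd_mem (k m : ℕ) :
    toPerm n (descProd n k m) ∈ fixingSubgroup (Perm ℕ) (Set.Icc 1 m)ᶜ := by
  rw [descProd, map_list_prod, List.map_map]
  refine list_prod_mem fun _ hy => ?_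
  obtain ⟨t, ht, rfl⟩ := List.mem_map.mp hy
  rw [List.mem_range] at ht
  rw [Function.comp_apply, toPerm_braidGen]
  exact braidGenPerm_mem_fixingSubgroup (Or.inl (by omega))

theorem toPerm_descProd_apply {k m : ℕ} (hk : 1 ≤ k) (hkm : k ≤ m) (hmn : m ≤ n) :
    toPerm n (descProd n k m) k = m := by
  induction m, hkm using Nat.le_induction with
  | base => simp [descProd_of_le]
  | succ m hm ih =>
    rw [descProd_succ hm, map_mul, Perm.mul_apply, ih (by omega),
      toPerm_braidGen_of_le (by omega) hmn, swap_apply_left]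

abbrev PureQuotient (n : ℕ) := BraidGroup n ⧸ pureBandSubgroup n

theorem coe_braidGen_mul_self (x : ℕ) :
    (braidGen n x : PureQuotient n) * braidGen n x = 1 := by
  rw [← QuotientGroup.mk_mul, ← pow_two, QuotientGroup.eq_one_iff]
  exact braidGen_sq_mem x

theorem coe_braidGen_inv (x : ℕ) :
    (((braidGen n x)⁻¹ : BraidGroup n) : PureQuotient n) = braidGen n x := by
  rw [QuotientGroup.mk_inv]
  exact inv_eq_of_mul_eq_one_right (coe_braidGen_mul_self x)

variable (n) in
/-- The class of the canonical lift of a permutation `w` of `{1, …, m}`: with `k = w⁻¹ m`, the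
lift of the permutation `w (σ_{m-1} ⋯ σ_k)⁻¹` of `{1, …, m - 1}`, followed by `σ_{m-1} ⋯ σ_k`,
which carries `k` to `m`. -/
def transversal : ℕ → Perm ℕ → PureQuotient n
  | 0, _ => 1
  | m + 1, w => transversal m (w * (toPerm n (descProd n (w⁻¹ (m + 1)) (m + 1)))⁻¹) *
      (descProd n (w⁻¹ (m + 1)) (m + 1) : PureQuotient n)

theorem transversal_one (m : ℕ) : transversal n m 1 = 1 := by
  induction m with
  | zero => rfl
  | succ m ih => simp [transversal, ih, descProd_of_le]

theorem transversal_succ_mul_braidGen_of_inv_apply_eq {m i : ℕ} {w : Perm ℕ} (hi : 1 ≤ i)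
    (him : i + 1 ≤ m + 1) (hmn : m + 1 ≤ n) (hk : w⁻¹ (m + 1) = i + 1) :
    transversal n (m + 1) w * braidGen n i = transversal n (m + 1) (w * swap i (i + 1)) := by
  have hk' : (w * swap i (i + 1))⁻¹ (m + 1) = i := by
    rw [mul_inv_rev, swap_inv, Perm.mul_apply, hk, swap_apply_right]
  rw [transversal, transversal, hk, hk', descProd_eq_mul_braidGen (k := i) (by omega), map_mul,
    toPerm_braidGen_of_le hi (by omega), mul_inv_rev, swap_inv, ← mul_assoc,
    mul_swap_mul_self, QuotientGroup.mk_mul, mul_assoc]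

theorem mul_inv_toPerm_descProd_mem {m : ℕ} (hmn : m + 1 ≤ n) {w : Perm ℕ}
    (hw : w ∈ fixingSubgroup (Perm ℕ) (Set.Icc 1 (m + 1))ᶜ) :
    w * (toPerm n (descProd n (w⁻¹ (m + 1)) (m + 1)))⁻¹ ∈
      fixingSubgroup (Perm ℕ) (Set.Icc 1 m)ᶜ := by
  obtain ⟨hk1, hk2⟩ : w⁻¹ (m + 1) ∈ Set.Icc 1 (m + 1) :=
    Perm.apply_mem_of_mem_fixingSubgroup_compl (inv_mem hw) (by simp)
  have hδ := toPerm_descProd_mem (n := n) (w⁻¹ (m + 1)) (m + 1)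
  rw [← Set.insert_Icc_right_eq_Icc_add_one (by omega)] at hw hδ
  refine Perm.mem_fixingSubgroup_compl_of_insert (mul_mem hw (inv_mem hδ)) ?_
  rw [Perm.mul_apply, Perm.inv_eq_iff_eq.mpr (toPerm_descProd_apply hk1 hk2 hmn).symm]
  exact Perm.eq_inv_iff_eq.mp rfl

/-- If `σ_i` crosses the last factor `D` of the lift as `σ_j`, the claim reduces to the one for
`m` strands at `j`. -/
theorem transversal_succ_mul_braidGen_of_mul_eq {m i j : ℕ} (hmn : m + 1 ≤ n) {w : Perm ℕ}
    (hw : w ∈ fixingSubgroup (Perm ℕ) (Set.Icc 1 (m + 1))ᶜ) (hi : 1 ≤ i) (him : i + 1 ≤ m + 1)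
    (hj : 1 ≤ j) (hjm : j + 1 ≤ m) (hfix : swap i (i + 1) (w⁻¹ (m + 1)) = w⁻¹ (m + 1))
    (hD : descProd n (w⁻¹ (m + 1)) (m + 1) * braidGen n i =
      braidGen n j * descProd n (w⁻¹ (m + 1)) (m + 1))
    (ih : ∀ w' ∈ fixingSubgroup (Perm ℕ) (Set.Icc 1 m)ᶜ,
      transversal n m w' * braidGen n j = transversal n m (w' * swap j (j + 1))) :
    transversal n (m + 1) w * braidGen n i = transversal n (m + 1) (w * swap i (i + 1)) := by
  set D := descProd n (w⁻¹ (m + 1)) (m + 1)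
  set δ := toPerm n D
  have hδ : swap i (i + 1) * δ⁻¹ = δ⁻¹ * swap j (j + 1) := by
    have hπ := congrArg (toPerm n) hD
    rw [map_mul, map_mul, toPerm_braidGen_of_le hi (by omega),
      toPerm_braidGen_of_le hj (by omega)] at hπ
    rw [eq_inv_mul_iff_mul_eq, ← mul_assoc, hπ, mul_inv_cancel_right]
  have hk : (w * swap i (i + 1))⁻¹ (m + 1) = w⁻¹ (m + 1) := by
    rw [mul_inv_rev, swap_inv, Perm.mul_apply, hfix]
  calc transversal n (m + 1) w * braidGen n i
      = transversal n m (w * δ⁻¹) * ↑(D * braidGen n i) := by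
        rw [transversal, QuotientGroup.mk_mul, mul_assoc]
    _ = transversal n m (w * δ⁻¹) * braidGen n j * D := by
        rw [hD, QuotientGroup.mk_mul, mul_assoc]
    _ = transversal n m (w * δ⁻¹ * swap j (j + 1)) * D := by
        rw [ih _ (mul_inv_toPerm_descProd_mem hmn hw)]
    _ = transversal n m (w * swap i (i + 1) * δ⁻¹) * D := by
        rw [mul_assoc w, mul_assoc w, hδ]
    _ = transversal n (m + 1) (w * swap i (i + 1)) := by
        rw [transversal, hk]

theorem transversal_mul_braidGen {m : ℕ} (hmn : m ≤ n) {w : Perm ℕ}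
    (hw : w ∈ fixingSubgroup (Perm ℕ) (Set.Icc 1 m)ᶜ) {i : ℕ} (hi : 1 ≤ i) (him : i + 1 ≤ m) :
    transversal n m w * braidGen n i = transversal n m (w * swap i (i + 1)) := by
  induction m generalizing w i with
  | zero => omega
  | succ m ih =>
  obtain ⟨hk1, hk2⟩ : w⁻¹ (m + 1) ∈ Set.Icc 1 (m + 1) :=
    Perm.apply_mem_of_mem_fixingSubgroup_compl (inv_mem hw) (by simp)
  set k := w⁻¹ (m + 1) with hk
  rcases lt_trichotomy (i + 1) k with h | h | h
  · exact transversal_succ_mul_braidGen_of_mul_eq hmn hw hi him hi (by omega)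
      (swap_apply_of_ne_of_ne (by omega) (by omega)) (commute_descProd_of_add_two_le h).eq.symm
      fun w' hw' => ih (by omega) hw' hi (by omega)
  · exact transversal_succ_mul_braidGen_of_inv_apply_eq hi him hmn h.symm
  rcases (show k ≤ i by omega).eq_or_lt with h | h
  · -- the previous case for `w * swap i (i + 1)`, together with `σ_i ^ 2 = 1`
    have hws : (w * swap i (i + 1))⁻¹ (m + 1) = i + 1 := by
      rw [mul_inv_rev, swap_inv, Perm.mul_apply, ← hk, h, swap_apply_left]
    have h' := transversal_succ_mul_braidGen_of_inv_apply_eq hi him hmn hws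
    rw [mul_swap_mul_self] at h'
    rw [← h', mul_assoc, coe_braidGen_mul_self, mul_one]
  · obtain ⟨j, rfl⟩ : ∃ j, i = j + 1 := ⟨i - 1, by omega⟩
    exact transversal_succ_mul_braidGen_of_mul_eq hmn hw (by omega) him (by omega) (by omega)
      (swap_apply_of_ne_of_ne (by omega) (by omega))
      (descProd_mul_braidGen_succ hk1 (by omega) (by omega) hmn)
      fun w' hw' => ih (by omega) hw' (by omega) (by omega)

theorem toPerm_mem_fixingSubgroup (g : BraidGroup n) :
    toPerm n g ∈ fixingSubgroup (Perm ℕ) (Set.Icc 1 n)ᶜ :=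
  PresentedGroup.generated_by _ ((fixingSubgroup (Perm ℕ) (Set.Icc 1 n)ᶜ).comap (toPerm n))
    (fun x => by
      rw [Subgroup.mem_comap, ← braidGen, toPerm_braidGen]
      exact braidGenPerm_mem_fixingSubgroup (Or.inr le_rfl)) g

theorem transversal_toPerm_mul_braidGen (g : BraidGroup n) (x : ℕ) :
    transversal n n (toPerm n g) * braidGen n x =
      transversal n n (toPerm n (g * braidGen n x)) := by
  by_cases hx : 1 ≤ x ∧ x + 1 ≤ n
  · rw [map_mul, toPerm_braidGen_of_le hx.1 hx.2,
      transversal_mul_braidGen le_rfl (toPerm_mem_fixingSubgroup g) hx.1 hx.2]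
  · rw [braidGen_eq_one (by omega), mul_one, QuotientGroup.mk_one, mul_one]

theorem coe_eq_transversal_toPerm (g : BraidGroup n) :
    (g : PureQuotient n) = transversal n n (toPerm n g) := by
  have hg : g ∈ Subgroup.closure (Set.range (braidGen n)) := by
    rw [show braidGen n = PresentedGroup.of from rfl, PresentedGroup.closure_range_of]
    trivial
  induction hg using Subgroup.closure_induction_right with
  | one => simp [transversal_one]
  | mul_right g _ _ hx ih =>
    obtain ⟨x, rfl⟩ := hx
    rw [QuotientGroup.mk_mul, ih, transversal_toPerm_mul_braidGen]
  | mul_inv_cancel g _ _ hx ih =>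
    obtain ⟨x, rfl⟩ := hx
    rw [QuotientGroup.mk_mul, coe_braidGen_inv, ih, transversal_toPerm_mul_braidGen, map_mul,
      map_mul, toPerm_braidGen_inv]

theorem ker_toPerm_le : (toPerm n).ker ≤ pureBandSubgroup n := fun g hg => by
  rw [← QuotientGroup.eq_one_iff, coe_eq_transversal_toPerm, MonoidHom.mem_ker.mp hg,
    transversal_one]

theorem bandSubgroup_le_of_dvd {m m' : ℕ → ℕ → ℕ}
    (h : ∀ i j, 1 ≤ i → i < j → j ≤ n → m i j ∣ m' i j) :
    bandSubgroup n m' ≤ bandSubgroup n m := by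
  rw [bandSubgroup, Subgroup.closure_le]
  rintro _ ⟨i, j, hi, hij, hjn, rfl⟩
  obtain ⟨c, hc⟩ := h i j hi hij hjn
  rw [hc, pow_mul]
  refine pow_mem ?_ c
  exact Subgroup.subset_closure ⟨i, j, hi, hij, hjn, rfl⟩

theorem map_toPerm_bandSubgroup {m : ℕ → ℕ → ℕ} (hsym : ∀ i j, m i j = m j i)
    (hval : ∀ i j, 1 ≤ i → i ≤ n → 1 ≤ j → j ≤ n → i ≠ j → m i j = 1 ∨ m i j = 2) :
    (bandSubgroup n m).map (toPerm n) = Subgroup.closure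
      {e | ∃ i j, 1 ≤ i ∧ i ≤ n ∧ 1 ≤ j ∧ j ≤ n ∧ (i = j ∨ m i j = 1) ∧ e = swap i j} := by
  rw [bandSubgroup, MonoidHom.map_closure]
  apply le_antisymm <;> rw [Subgroup.closure_le]
  · rintro _ ⟨_, ⟨i, j, hi, hij, hjn, rfl⟩, rfl⟩
    rw [map_pow, toPerm_band hi hij hjn]
    rcases hval i j hi (by omega) (by omega) hjn hij.ne with h | h
    · rw [h, pow_one]
      exact Subgroup.subset_closure ⟨i, j, hi, by omega, by omega, hjn, Or.inr h, rfl⟩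
    · rw [h, pow_two, swap_mul_self]
      exact one_mem _
  · rintro _ ⟨i, j, hi, hin, hj, hjn, hm, rfl⟩
    rcases lt_trichotomy i j with hij | rfl | hij
    · refine Subgroup.subset_closure ⟨_, ⟨i, j, hi, hij, hjn, rfl⟩, ?_⟩
      rw [hm.resolve_left hij.ne, pow_one, toPerm_band hi hij hjn]
    · rw [swap_self]
      exact one_mem _
    · refine Subgroup.subset_closure ⟨_, ⟨j, i, hj, hij, hin, rfl⟩, ?_⟩
      rw [← hsym, hm.resolve_left hij.ne', pow_one, toPerm_band hj hij hin, swap_comm]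

end BraidGroup

theorem stmt6_general (n : ℕ) (m : ℕ → ℕ → ℕ)
    (hsym : ∀ i j, m i j = m j i)
    (hval : ∀ i j, 1 ≤ i → i ≤ n → 1 ≤ j → j ≤ n → i ≠ j → m i j = 1 ∨ m i j = 2) :
    -- `S_{n,P}`: the subgroup of the symmetric group generated by the transpositions
    -- `(i j)` with `i ∼ j` (acting on `{1,…,n} ⊆ ℕ`)
    letI SnP : Subgroup (Equiv.Perm ℕ) :=
      Subgroup.closure
        {e | ∃ i j, 1 ≤ i ∧ i ≤ n ∧ 1 ≤ j ∧ j ≤ n ∧ (i = j ∨ m i j = 1) ∧ e = Equiv.swap i j}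
    -- `π : Br_n → S_n`, `σ_i ↦ (i, i+1)`; its kernel is the pure braid group `PBr_n`,
    -- and `1 → PBr_n → E_M → S_{n,P} → 1` is exact
    ∃ π : BraidGroup n →* Equiv.Perm ℕ,
      (∀ i, 1 ≤ i → i + 1 ≤ n → π (braidGen n i) = Equiv.swap i (i + 1)) ∧
      π.ker ≤ bandSubgroup n m ∧
      Subgroup.map π (bandSubgroup n m) = SnP := by
  refine ⟨BraidGroup.toPerm n, fun _ => BraidGroup.toPerm_braidGen_of_le,
    BraidGroup.ker_toPerm_le.trans (BraidGroup.bandSubgroup_le_of_dvd fun i j hi hij hjn => ?_),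
    BraidGroup.map_toPerm_bandSubgroup hsym hval⟩
  rcases hval i j hi (by omega) (by omega) hjn hij.ne with h | h <;> simp [h]

theorem stmt6 (n : ℕ) (m : ℕ → ℕ → ℕ)
    (hsym : ∀ i j, m i j = m j i)
    (hval : ∀ i j, 1 ≤ i → i ≤ n → 1 ≤ j → j ≤ n → i ≠ j → m i j = 1 ∨ m i j = 2)
    (htrans : ∀ i j k, 1 ≤ i → i ≤ n → 1 ≤ j → j ≤ n → 1 ≤ k → k ≤ n →
      i ≠ j → j ≠ k → i ≠ k → m i j = 1 → m j k = 1 → m i k = 1) :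
    -- `S_{n,P}`: the subgroup of the symmetric group generated by the transpositions
    -- `(i j)` with `i ∼ j` (acting on `{1,…,n} ⊆ ℕ`)
    letI SnP : Subgroup (Equiv.Perm ℕ) :=
      Subgroup.closure
        {e | ∃ i j, 1 ≤ i ∧ i ≤ n ∧ 1 ≤ j ∧ j ≤ n ∧ (i = j ∨ m i j = 1) ∧ e = Equiv.swap i j}
    -- `π : Br_n → S_n`, `σ_i ↦ (i, i+1)`; its kernel is the pure braid group `PBr_n`,
    -- and `1 → PBr_n → E_M → S_{n,P} → 1` is exact
    ∃ π : BraidGroup n →* Equiv.Perm ℕ,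
      (∀ i, 1 ≤ i → i + 1 ≤ n → π (braidGen n i) = Equiv.swap i (i + 1)) ∧
      π.ker ≤ bandSubgroup n m ∧
      Subgroup.map π (bandSubgroup n m) = SnP :=
  stmt6_general n m hsym hval
end

section
/- Let M = (m_{ij}) be a symmetric matrix with entries m_{ij} ∈ {1,2} for i ≠ j such that m_{ik} = 1 whenever m_{ij} = 1 and m_{jk} = 1. Let G_M be the presented group on generators b̃_{ij} (1 ≤ i < j ≤ n) with the relations (i)–(v) of the presentation theorem. Let I = { i ∈ {1,…,n} : i = n or m_{in} = 1 }, and let H_M ≤ G_M be the subgroup generated by the elements b̃_{ij} for i < j < n, the elements b̃_{in} for i < n with i ∉ I, and the elements b̃_{in}² for i < n with i ∈ I. Then G_M is the union of the right cosets b̃_{tn} H_M over t ∈ I, where b̃_{nn} is interpreted as the identity (so the coset for t = n is H_M itself); in particular H_M has index at most |I| in G_M. -/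
/-- The generator `b̃_{ij}` of `G_M`, with the unordered-pair convention `b̃_{ji} = b̃_{ij}`,
as an element of the free group on pairs. -/
def eGen (i j : ℕ) : FreeGroup (ℕ × ℕ) := FreeGroup.of (min i j, max i j)

/-- `i, j, k` are in cyclic order. -/
def Cyc3 (i j k : ℕ) : Prop := (i < j ∧ j < k) ∨ (j < k ∧ k < i) ∨ (k < i ∧ i < j)

/-- Relators of the group `G_M` of Theorem 2 (relations (i)–(v)); generators indexed by
pairs of natural numbers, where the pairs `(i,j)` with `1 ≤ i < j ≤ n` are the generators
`b̃_{ij}` and all remaining generators are killed. -/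
def manfRels (n : ℕ) (m : ℕ → ℕ → ℕ) : Set (FreeGroup (ℕ × ℕ)) :=
  {r | -- (i)
       (∃ i j k l, 1 ≤ i ∧ i ≤ n ∧ 1 ≤ j ∧ j ≤ n ∧ 1 ≤ k ∧ k ≤ n ∧ 1 ≤ l ∧ l ≤ n ∧
          ((i < j ∧ j < k ∧ k < l) ∨ (j < k ∧ k < i ∧ i < l)) ∧
          r = eGen i l * eGen j k * (eGen j k * eGen i l)⁻¹) ∨
       -- (ii), where `A = b̃_{kl}` if `m_{kl} = 2` and `A = b̃_{kl}²` if `m_{kl} = 1`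
       (∃ i j k l, 1 ≤ i ∧ i < j ∧ j < k ∧ k < l ∧ l ≤ n ∧
          r = eGen j l * (if m k l = 1 then eGen k l ^ 2 else eGen k l) * eGen i k *
                (if m k l = 1 then eGen k l ^ 2 else eGen k l)⁻¹ *
              ((if m k l = 1 then eGen k l ^ 2 else eGen k l) * eGen i k *
                (if m k l = 1 then eGen k l ^ 2 else eGen k l)⁻¹ * eGen j l)⁻¹) ∨
       -- (iii)
       (∃ i j k, 1 ≤ i ∧ i ≤ n ∧ 1 ≤ j ∧ j ≤ n ∧ 1 ≤ k ∧ k ≤ n ∧ Cyc3 i j k ∧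
          m i j = 1 ∧ m i k = 2 ∧ m j k = 2 ∧
          (r = eGen i j * eGen i k * (eGen j k * eGen i j)⁻¹ ∨
           r = eGen i j * eGen i k * eGen j k * (eGen i k * eGen j k * eGen i j)⁻¹)) ∨
       -- (iv)
       (∃ i j k, 1 ≤ i ∧ i < j ∧ j < k ∧ k ≤ n ∧ m i j = 2 ∧ m i k = 2 ∧ m j k = 2 ∧
          (r = eGen i j * eGen i k * eGen j k * (eGen j k * eGen i j * eGen i k)⁻¹ ∨
           r = eGen j k * eGen i j * eGen i k * (eGen i k * eGen j k * eGen i j)⁻¹)) ∨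
       -- (v)
       (∃ i j k, 1 ≤ i ∧ i < j ∧ j < k ∧ k ≤ n ∧ m i j = 1 ∧ m i k = 1 ∧ m j k = 1 ∧
          (r = eGen i j * eGen i k * (eGen j k * eGen i j)⁻¹ ∨
           r = eGen j k * eGen i j * (eGen i k * eGen j k)⁻¹)) ∨
       -- out-of-range generators are killed
       (∃ p : ℕ × ℕ, ¬(1 ≤ p.1 ∧ p.1 < p.2 ∧ p.2 ≤ n) ∧ r = FreeGroup.of p)}

namespace Stmt8A

variable (n : ℕ) (m : ℕ → ℕ → ℕ)

abbrev GM := PresentedGroup (manfRels n m)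

def pP : FreeGroup (ℕ × ℕ) →* GM n m := QuotientGroup.mk' _

abbrev BB (i j : ℕ) : GM n m := pP n m (eGen i j)

lemma rel_one {r : FreeGroup (ℕ × ℕ)} (hr : r ∈ manfRels n m) : pP n m r = 1 :=
  (QuotientGroup.eq_one_iff r).2 (Subgroup.subset_normalClosure hr)

lemma BB_symm (i j : ℕ) : BB n m i j = BB n m j i := by
  unfold BB eGen; rw [min_comm, max_comm]

lemma BB_of {i j : ℕ} (h : i < j) : BB n m i j = PresentedGroup.of (i, j) := by
  unfold BB eGen; rw [min_eq_left h.le, max_eq_right h.le]; rfl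

lemma relI {i j k l : ℕ} (hi : 1 ≤ i) (hj : 1 ≤ j) (hl : l ≤ n)
    (hord : (i < j ∧ j < k ∧ k < l) ∨ (j < k ∧ k < i ∧ i < l)) :
    BB n m i l * BB n m j k = BB n m j k * BB n m i l := by
  have h := rel_one n m (r := eGen i l * eGen j k * (eGen j k * eGen i l)⁻¹)
    (Or.inl ⟨i, j, k, l, hi, by omega, hj, by omega, by omega, by omega, by omega, hl,
      hord, rfl⟩)
  simp only [map_mul, map_inv] at h
  rw [mul_inv_eq_one] at h
  exact h

lemma relII {i j k l : ℕ} (hi : 1 ≤ i) (hij : i < j) (hjk : j < k) (hkl : k < l)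
    (hl : l ≤ n) :
    BB n m j l * (if m k l = 1 then BB n m k l ^ 2 else BB n m k l) * BB n m i k *
      (if m k l = 1 then BB n m k l ^ 2 else BB n m k l)⁻¹ =
    (if m k l = 1 then BB n m k l ^ 2 else BB n m k l) * BB n m i k *
      (if m k l = 1 then BB n m k l ^ 2 else BB n m k l)⁻¹ * BB n m j l := by
  have h := rel_one n m (Or.inr (Or.inl ⟨i, j, k, l, hi, hij, hjk, hkl, hl, rfl⟩))
  by_cases hm : m k l = 1
  · rw [if_pos hm] at h
    rw [if_pos hm]
    simp only [map_mul, map_inv, map_pow] at h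
    rw [mul_inv_eq_one] at h
    exact h
  · rw [if_neg hm] at h
    rw [if_neg hm]
    simp only [map_mul, map_inv] at h
    rw [mul_inv_eq_one] at h
    exact h

lemma relIII1 {i j k : ℕ} (hi1 : 1 ≤ i) (hin : i ≤ n) (hj1 : 1 ≤ j) (hjn : j ≤ n)
    (hk1 : 1 ≤ k) (hkn : k ≤ n) (hc : Cyc3 i j k)
    (m1 : m i j = 1) (m2 : m i k = 2) (m3 : m j k = 2) :
    BB n m i j * BB n m i k = BB n m j k * BB n m i j := by
  have h := rel_one n m (r := eGen i j * eGen i k * (eGen j k * eGen i j)⁻¹)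
    (Or.inr (Or.inr (Or.inl ⟨i, j, k, hi1, hin, hj1, hjn, hk1, hkn, hc, m1, m2, m3,
      Or.inl rfl⟩)))
  simp only [map_mul, map_inv] at h
  rw [mul_inv_eq_one] at h
  exact h

lemma relV1 {i j k : ℕ} (hi : 1 ≤ i) (hij : i < j) (hjk : j < k) (hk : k ≤ n)
    (m1 : m i j = 1) (m2 : m i k = 1) (m3 : m j k = 1) :
    BB n m i j * BB n m i k = BB n m j k * BB n m i j := by
  have h := rel_one n m (r := eGen i j * eGen i k * (eGen j k * eGen i j)⁻¹)
    (Or.inr (Or.inr (Or.inr (Or.inr (Or.inl ⟨i, j, k, hi, hij, hjk, hk, m1, m2, m3,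
      Or.inl rfl⟩)))))
  simp only [map_mul, map_inv] at h
  rw [mul_inv_eq_one] at h
  exact h

lemma relV2 {i j k : ℕ} (hi : 1 ≤ i) (hij : i < j) (hjk : j < k) (hk : k ≤ n)
    (m1 : m i j = 1) (m2 : m i k = 1) (m3 : m j k = 1) :
    BB n m j k * BB n m i j = BB n m i k * BB n m j k := by
  have h := rel_one n m (r := eGen j k * eGen i j * (eGen i k * eGen j k)⁻¹)
    (Or.inr (Or.inr (Or.inr (Or.inr (Or.inl ⟨i, j, k, hi, hij, hjk, hk, m1, m2, m3,
      Or.inr rfl⟩)))))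
  simp only [map_mul, map_inv] at h
  rw [mul_inv_eq_one] at h
  exact h

lemma of_triv {p q : ℕ} (h : ¬(1 ≤ p ∧ p < q ∧ q ≤ n)) :
    (PresentedGroup.of (p, q) : GM n m) = 1 :=
  rel_one n m (Or.inr (Or.inr (Or.inr (Or.inr (Or.inr ⟨(p, q), h, rfl⟩)))))


def HM : Subgroup (GM n m) :=
  Subgroup.closure
    {x | (∃ i j, 1 ≤ i ∧ i < j ∧ j < n ∧ x = PresentedGroup.of (i, j)) ∨
         (∃ i, 1 ≤ i ∧ i < n ∧ m i n ≠ 1 ∧ x = PresentedGroup.of (i, n)) ∨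
         (∃ i, 1 ≤ i ∧ i < n ∧ m i n = 1 ∧ x = (PresentedGroup.of (i, n)) ^ 2)}

lemma mem1 {i j : ℕ} (hi : 1 ≤ i) (hij : i < j) (hj : j < n) : BB n m i j ∈ HM n m := by
  rw [BB_of n m hij]
  exact Subgroup.subset_closure (Or.inl ⟨i, j, hi, hij, hj, rfl⟩)

lemma mem2 {i : ℕ} (hi : 1 ≤ i) (hin : i < n) (hm : m i n ≠ 1) : BB n m i n ∈ HM n m := by
  rw [BB_of n m hin]
  exact Subgroup.subset_closure (Or.inr (Or.inl ⟨i, hi, hin, hm, rfl⟩))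

lemma mem3 {i : ℕ} (hi : 1 ≤ i) (hin : i < n) (hm : m i n = 1) :
    (BB n m i n) ^ 2 ∈ HM n m := by
  rw [BB_of n m hin]
  exact Subgroup.subset_closure (Or.inr (Or.inr ⟨i, hi, hin, hm, rfl⟩))

/-- If `Btn * x = z * Btn` with `z ∈ H`, then `Btn⁻¹ * x * Btn ∈ H` (using `Btn² ∈ H`). -/
lemma conj_key {t : ℕ} (ht1 : 1 ≤ t) (htn : t < n) (hmt : m t n = 1) {x z : GM n m}
    (hz : z ∈ HM n m) (hx : BB n m t n * x = z * BB n m t n) :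
    (BB n m t n)⁻¹ * x * BB n m t n ∈ HM n m := by
  have h2 : BB n m t n * BB n m t n ∈ HM n m := by
    have := mem3 n m ht1 htn hmt; rwa [pow_two] at this
  have hxe : x = (BB n m t n)⁻¹ * z * BB n m t n := by
    rw [mul_assoc, ← hx, ← mul_assoc, inv_mul_cancel, one_mul]
  have heq : (BB n m t n)⁻¹ * x * BB n m t n =
      (BB n m t n * BB n m t n)⁻¹ * z * (BB n m t n * BB n m t n) := by
    rw [hxe]; group
  rw [heq]
  exact mul_mem (mul_mem (inv_mem h2) hz) h2

def Iset (t : ℕ) : Prop := 1 ≤ t ∧ t ≤ n ∧ (t = n ∨ m t n = 1)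

def rep (t : ℕ) : GM n m := if t = n then 1 else PresentedGroup.of (t, n)

lemma rep_n : rep n m n = 1 := if_pos rfl

lemma rep_lt {t : ℕ} (h : t < n) : rep n m t = BB n m t n := by
  rw [rep, if_neg (by omega : ¬ t = n), BB_of n m h]

def sig (p q t : ℕ) : ℕ :=
  if m p q = 1 then (if t = p then q else if t = q then p else t) else t

lemma sig_invol {p q t : ℕ} (hpq : p ≠ q) : sig m p q (sig m p q t) = t := by
  unfold sig; split_ifs <;> omega

section Main
variable (hn : 1 ≤ n)
    (hsym : ∀ i j, m i j = m j i)
    (hval : ∀ i j, 1 ≤ i → i ≤ n → 1 ≤ j → j ≤ n → i ≠ j → m i j = 1 ∨ m i j = 2)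
    (htrans : ∀ i j k, 1 ≤ i → i ≤ n → 1 ≤ j → j ≤ n → 1 ≤ k → k ≤ n →
      i ≠ j → j ≠ k → i ≠ k → m i j = 1 → m j k = 1 → m i k = 1)

include hsym hval htrans

lemma sig_mem {p q t : ℕ} (hp : 1 ≤ p) (hpq : p < q) (hq : q ≤ n)
    (ht : Iset n m t) : Iset n m (sig m p q t) := by
  obtain ⟨ht1, htn, htI⟩ := ht
  unfold sig
  split_ifs with h1 h2 h3
  · -- m p q = 1, t = p ↦ q
    refine ⟨by omega, hq, ?_⟩
    by_cases hqn : q = n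
    · exact Or.inl hqn
    · have hpn : m p n = 1 := by
        rcases htI with h | h
        · omega
        · rwa [h2] at h
      refine Or.inr (htrans q p n (by omega) hq hp (by omega) (by omega) le_rfl
        (by omega) (by omega) (by omega) (by rw [hsym]; exact h1) hpn)
  · -- m p q = 1, t = q ↦ p
    refine ⟨hp, by omega, Or.inr ?_⟩
    by_cases hqn : q = n
    · rw [← hqn]; exact h1
    · have hqn' : m q n = 1 := by
        rcases htI with h | h
        · omega
        · rwa [h3] at h
      exact htrans p q n hp (by omega) (by omega) (by omega) (by omega) le_rfl
        (by omega) (by omega) (by omega) h1 hqn'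
  · exact ⟨ht1, htn, htI⟩
  · exact ⟨ht1, htn, htI⟩


lemma key_tq {t q : ℕ} (ht1 : 1 ≤ t) (htq : t < q) (hqn : q < n) (hmt : m t n = 1) :
    BB n m t n * BB n m q n = BB n m t q * BB n m t n := by
  by_cases hm : m q n = 1
  · have hmtq : m t q = 1 := htrans t n q ht1 (by omega) (by omega) le_rfl (by omega)
      (by omega) (by omega) (by omega) (by omega) hmt (by rw [hsym]; exact hm)
    have r1 := relV1 n m ht1 htq hqn le_rfl hmtq hmt hm
    have r2 := relV2 n m ht1 htq hqn le_rfl hmtq hmt hm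
    -- r1 : BB t q * BB t n = BB q n * BB t q ;  r2 : BB q n * BB t q = BB t n * BB q n
    exact (r2.symm.trans r1.symm).symm ▸ (r2.symm.trans r1.symm).symm
  · have hmqn2 : m q n = 2 := by
      rcases hval q n (by omega) (by omega) (by omega) le_rfl (by omega) with h | h
      · omega
      · exact h
    have hmtq2 : m t q = 2 := by
      rcases hval t q ht1 (by omega) (by omega) (by omega) (by omega) with h | h
      · exact absurd (htrans q t n (by omega) (by omega) ht1 (by omega) (by omega)
          le_rfl (by omega) (by omega) (by omega) (by rw [hsym]; exact h) hmt) (by omega)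
      · exact h
    have r := relIII1 n m (i := n) (j := t) (k := q) (by omega) le_rfl ht1 (by omega)
      (by omega) (by omega) (Or.inr (Or.inl ⟨htq, hqn⟩)) (by rw [hsym]; exact hmt)
      (by rw [hsym]; exact hmqn2) hmtq2
    -- r : BB n t * BB n q = BB t q * BB n t
    rw [BB_symm n m n t, BB_symm n m n q] at r
    exact r

omit hval htrans in
lemma sandwich {t : ℕ} (ht1 : 1 ≤ t) (htn2 : t < n) (hmt : m t n = 1)
    {a c x : GM n m} (hc : c ∈ HM n m) (hx : x ∈ HM n m) (haH : a ∈ HM n m)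
    (ha : BB n m t n * a = c * BB n m t n)
    (hcomm : BB n m t n * a * x * a⁻¹ = a * x * a⁻¹ * BB n m t n) :
    (BB n m t n)⁻¹ * x * BB n m t n ∈ HM n m := by
  have hY : a * x * a⁻¹ ∈ HM n m := mul_mem (mul_mem haH hx) (inv_mem haH)
  have hac : (BB n m t n)⁻¹ * a * BB n m t n ∈ HM n m := conj_key n m ht1 htn2 hmt hc ha
  have hacinv : (BB n m t n)⁻¹ * a⁻¹ * BB n m t n ∈ HM n m := by
    have e : (BB n m t n)⁻¹ * a⁻¹ * BB n m t n = ((BB n m t n)⁻¹ * a * BB n m t n)⁻¹ := by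
      group
    rw [e]; exact inv_mem hac
  have h5 : (BB n m t n)⁻¹ * (a * x * a⁻¹) * BB n m t n = a * x * a⁻¹ := by
    rw [mul_assoc, ← hcomm, ← mul_assoc, ← mul_assoc, ← mul_assoc, inv_mul_cancel, one_mul]
  have e : (BB n m t n)⁻¹ * x * BB n m t n =
      ((BB n m t n)⁻¹ * a⁻¹ * BB n m t n) * ((BB n m t n)⁻¹ * (a * x * a⁻¹) * BB n m t n) *
        ((BB n m t n)⁻¹ * a * BB n m t n) := by group
  rw [e, h5]
  exact mul_mem (mul_mem hacinv hY) hac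

lemma step' {p q t : ℕ} (hp : 1 ≤ p) (hpq : p < q) (hq : q ≤ n) (ht : Iset n m t) :
    (rep n m (sig m p q t))⁻¹ * BB n m p q * rep n m t ∈ HM n m := by
  obtain ⟨ht1, htn, htI⟩ := ht
  by_cases htn' : t = n
  · rw [htn', rep_n, mul_one]
    by_cases hqn : q = n
    · rw [hqn] at hpq ⊢
      by_cases hm : m p n = 1
      · have hs : sig m p n n = p := by unfold sig; split_ifs <;> omega
        rw [hs, rep_lt n m hpq, inv_mul_cancel]
        exact one_mem _
      · have hs : sig m p n n = n := by unfold sig; split_ifs <;> omega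
        rw [hs, rep_n, inv_one, one_mul]
        exact mem2 n m hp hpq hm
    · have hs : sig m p q n = n := by unfold sig; split_ifs <;> omega
      rw [hs, rep_n, inv_one, one_mul]
      exact mem1 n m hp hpq (by omega)
  · have htn2 : t < n := by omega
    have hmt : m t n = 1 := htI.resolve_left htn' 
    rw [rep_lt n m htn2]
    by_cases hqn : q = n
    · rw [hqn] at hpq ⊢
      have hpn : p < n := hpq
      by_cases htp : t = p
      · have hmpn0 : m p n = 1 := by rw [← htp]; exact hmt
        have hs : sig m p n t = n := by unfold sig; split_ifs <;> omega
        rw [hs, rep_n, inv_one, one_mul, ← htp]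
        have h2 : BB n m t n * BB n m t n ∈ HM n m := by
          have := mem3 n m ht1 htn2 hmt; rwa [pow_two] at this
        exact h2
      · have hs : sig m p n t = t := by unfold sig; split_ifs <;> omega
        rw [hs, rep_lt n m htn2]
        by_cases hm : m p n = 1
        · rcases lt_or_gt_of_ne (show p ≠ t by omega) with hpt | htp'
          · have hm2 : m p t = 1 := htrans p n t hp (by omega) (by omega) le_rfl ht1
              (by omega) (by omega) (by omega) (by omega) hm (by rw [hsym]; exact hmt)
            have r2 := relV2 n m hp hpt htn2 le_rfl hm2 hm hmt
            -- r2 : BB t n * BB p t = BB p n * BB t n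
            have e : (BB n m t n)⁻¹ * BB n m p n * BB n m t n = BB n m p t := by
              rw [mul_assoc, ← r2, ← mul_assoc, inv_mul_cancel, one_mul]
            rw [e]; exact mem1 n m hp hpt htn2
          · have hm2 : m t p = 1 := htrans t n p ht1 (by omega) (by omega) le_rfl hp
              (by omega) (by omega) (by omega) (by omega) hmt (by rw [hsym]; exact hm)
            have r1 := relV1 n m ht1 htp' hpn le_rfl hm2 hmt hm
            have r2 := relV2 n m ht1 htp' hpn le_rfl hm2 hmt hm
            exact conj_key n m ht1 htn2 hmt (mem1 n m ht1 htp' hpn) (r1.trans r2).symm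
        · have hm2 : m p n = 2 := by
            rcases hval p n hp (by omega) (by omega) le_rfl (by omega) with h | h
            · omega
            · exact h
          rcases lt_or_gt_of_ne (show p ≠ t by omega) with hpt | htp'
          · have hmtp : m t p = 2 := by
              rcases hval t p ht1 (by omega) hp (by omega) (by omega) with h | h
              · exact absurd (htrans p t n hp (by omega) ht1 (by omega) (by omega)
                  le_rfl (by omega) (by omega) (by omega) (by rw [hsym]; exact h) hmt)
                  (by omega)
              · exact h
            have r := relIII1 n m (i := t) (j := n) (k := p) ht1 (by omega) (by omega)
              le_rfl hp (by omega) (Or.inr (Or.inr ⟨hpt, htn2⟩)) hmt hmtp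
              (by rw [hsym]; exact hm2)
            -- r : BB t n * BB t p = BB n p * BB t n
            rw [BB_symm n m n p] at r
            have e : (BB n m t n)⁻¹ * BB n m p n * BB n m t n = BB n m t p := by
              rw [mul_assoc, ← r, ← mul_assoc, inv_mul_cancel, one_mul]
            rw [e, BB_symm n m t p]
            exact mem1 n m hp hpt htn2
          · have hmtp : m t p = 2 := by
              rcases hval t p ht1 (by omega) hp (by omega) (by omega) with h | h
              · exact absurd (htrans p t n hp (by omega) ht1 (by omega) (by omega)
                  le_rfl (by omega) (by omega) (by omega) (by rw [hsym]; exact h) hmt)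
                  (by omega)
              · exact h
            have r := relIII1 n m (i := n) (j := t) (k := p) (by omega) le_rfl ht1
              (by omega) hp (by omega) (Or.inr (Or.inl ⟨htp', hpn⟩))
              (by rw [hsym]; exact hmt) (by rw [hsym]; exact hm2) hmtp
            -- r : BB n t * BB n p = BB t p * BB n t
            rw [BB_symm n m n t, BB_symm n m n p] at r
            exact conj_key n m ht1 htn2 hmt (mem1 n m ht1 htp' hpn) r
    · -- q < n
      have hqn2 : q < n := by omega
      by_cases htp : t = p
      · by_cases hm : m p q = 1
        · have hs : sig m p q t = q := by unfold sig; split_ifs <;> omega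
          rw [hs, rep_lt n m hqn2, htp]
          have hmpn : m p n = 1 := by rw [← htp]; exact hmt
          have r1 := relV1 n m hp hpq hqn2 le_rfl hm hmpn
            (htrans q p n (by omega) (by omega) hp (by omega) (by omega) le_rfl
              (by omega) (by omega) (by omega) (by rw [hsym]; exact hm) hmpn)
          -- r1 : BB p q * BB p n = BB q n * BB p q
          have e : (BB n m q n)⁻¹ * BB n m p q * BB n m p n = BB n m p q := by
            rw [mul_assoc, r1, ← mul_assoc, inv_mul_cancel, one_mul]
          rw [e]; exact mem1 n m hp hpq hqn2
        · have hs : sig m p q t = t := by unfold sig; split_ifs <;> omega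
          rw [hs, rep_lt n m htn2, htp]
          have hmpn : m p n = 1 := by rw [← htp]; exact hmt
          have hkey := key_tq n m hsym hval htrans hp hpq hqn2 hmpn
          -- hkey : BB p n * BB q n = BB p q * BB p n
          have hmqn2 : m q n = 2 := by
            rcases hval q n (by omega) (by omega) (by omega) le_rfl (by omega) with h | h
            · exact absurd (htrans p n q hp (by omega) (by omega) le_rfl (by omega)
                (by omega) (by omega) (by omega) (by omega) hmpn
                (by rw [hsym]; exact h)) (by omega)
            · exact h
          have e : (BB n m p n)⁻¹ * BB n m p q * BB n m p n = BB n m q n := by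
            rw [mul_assoc, ← hkey, ← mul_assoc, inv_mul_cancel, one_mul]
          rw [e]; exact mem2 n m (by omega) hqn2 (by omega)
      · by_cases htq : t = q
        · by_cases hm : m p q = 1
          · have hs : sig m p q t = p := by unfold sig; split_ifs <;> omega
            rw [hs, rep_lt n m (by omega), htq]
            have hmqn : m q n = 1 := by rw [← htq]; exact hmt
            have hmpn : m p n = 1 := htrans p q n hp (by omega) (by omega) (by omega)
              (by omega) le_rfl (by omega) (by omega) (by omega) hm hmqn
            have r1 := relV1 n m hp hpq hqn2 le_rfl hm hmpn hmqn
            have r2 := relV2 n m hp hpq hqn2 le_rfl hm hmpn hmqn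
            -- r1 : BB p q * BB p n = BB q n * BB p q ; r2 : BB q n * BB p q = BB p n * BB q n
            have hpn' : BB n m p n = BB n m q n * BB n m p q * (BB n m q n)⁻¹ := by
              rw [eq_mul_inv_iff_mul_eq]; exact r2.symm
            have braid : BB n m p q * BB n m q n * BB n m p q =
                BB n m q n * BB n m p q * BB n m q n := by
              have h1 : BB n m p q * BB n m p n * BB n m q n =
                  BB n m q n * BB n m p q * BB n m q n := by rw [r1]
              rw [hpn'] at h1
              calc BB n m p q * BB n m q n * BB n m p q
                  = BB n m p q * (BB n m q n * BB n m p q * (BB n m q n)⁻¹) * BB n m q n := by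
                    group
                _ = BB n m q n * BB n m p q * BB n m q n := h1
            have E : BB n m p q * BB n m q n * BB n m p q =
                BB n m p n * BB n m q n * BB n m q n := by
              rw [braid, r2]
            have e : (BB n m p n)⁻¹ * BB n m p q * BB n m q n =
                BB n m q n * BB n m q n * (BB n m p q)⁻¹ := by
              calc (BB n m p n)⁻¹ * BB n m p q * BB n m q n
                  = (BB n m p n)⁻¹ * (BB n m p q * BB n m q n * BB n m p q) *
                      (BB n m p q)⁻¹ := by group
                _ = (BB n m p n)⁻¹ * (BB n m p n * BB n m q n * BB n m q n) *
                      (BB n m p q)⁻¹ := by rw [E]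
                _ = BB n m q n * BB n m q n * (BB n m p q)⁻¹ := by group
            rw [e]
            have h2 : BB n m q n * BB n m q n ∈ HM n m := by
              have := mem3 n m (by omega) hqn2 hmqn; rwa [pow_two] at this
            exact mul_mem h2 (inv_mem (mem1 n m hp hpq hqn2))
          · have hs : sig m p q t = t := by unfold sig; split_ifs <;> omega
            rw [hs, rep_lt n m htn2, htq]
            have hmqn : m q n = 1 := by rw [← htq]; exact hmt
            have hmpq2 : m p q = 2 := by
              rcases hval p q hp (by omega) (by omega) (by omega) (by omega) with h | h
              · omega
              · exact h
            have hmpn2 : m p n = 2 := by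
              rcases hval p n hp (by omega) (by omega) le_rfl (by omega) with h | h
              · exact absurd (htrans p n q hp (by omega) (by omega) le_rfl (by omega)
                  (by omega) (by omega) (by omega) (by omega) h
                  (by rw [hsym]; exact hmqn)) (by omega)
              · exact h
            have r := relIII1 n m (i := q) (j := n) (k := p) (by omega) (by omega)
              (by omega) le_rfl hp (by omega) (Or.inr (Or.inr ⟨hpq, hqn2⟩)) hmqn
              (by rw [hsym]; exact hmpq2) (by rw [hsym]; exact hmpn2)
            -- r : BB q n * BB q p = BB n p * BB q n
            rw [BB_symm n m q p, BB_symm n m n p] at r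
            exact conj_key n m (by omega) hqn2 hmqn (mem2 n m hp (by omega) (by omega)) r
        · have hs : sig m p q t = t := by unfold sig; split_ifs <;> omega
          rw [hs, rep_lt n m htn2]
          by_cases hsep : t < p ∨ q < t
          · have r := relI n m (i := t) (j := p) (k := q) (l := n) ht1 hp le_rfl
              (by omega)
            -- r : BB t n * BB p q = BB p q * BB t n
            have e : (BB n m t n)⁻¹ * BB n m p q * BB n m t n = BB n m p q := by
              rw [mul_assoc, ← r, ← mul_assoc, inv_mul_cancel, one_mul]
            rw [e]; exact mem1 n m hp hpq hqn2
          · have hpt : p < t := by omega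
            have htq2 : t < q := by omega
            have hcomm := relII n m (i := p) (j := t) (k := q) (l := n) hp hpt htq2
              hqn2 le_rfl
            have hkey := key_tq n m hsym hval htrans ht1 htq2 hqn2 hmt
            -- hkey : BB t n * BB q n = BB t q * BB t n
            by_cases hm : m q n = 1
            · rw [if_pos hm] at hcomm
              have ha : BB n m t n * BB n m q n ^ 2 = BB n m t q ^ 2 * BB n m t n := by
                rw [pow_two, pow_two]
                calc BB n m t n * (BB n m q n * BB n m q n)
                    = (BB n m t n * BB n m q n) * BB n m q n := by group
                  _ = (BB n m t q * BB n m t n) * BB n m q n := by rw [hkey]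
                  _ = BB n m t q * (BB n m t n * BB n m q n) := by group
                  _ = BB n m t q * (BB n m t q * BB n m t n) := by rw [hkey]
                  _ = BB n m t q * BB n m t q * BB n m t n := by group
              exact sandwich n m hsym ht1 htn2 hmt
                (pow_mem (mem1 n m ht1 htq2 hqn2) 2) (mem1 n m hp hpq hqn2)
                (mem3 n m (by omega) hqn2 hm) ha hcomm
            · rw [if_neg hm] at hcomm
              exact sandwich n m hsym ht1 htn2 hmt (mem1 n m ht1 htq2 hqn2)
                (mem1 n m hp hpq hqn2) (mem2 n m (by omega) hqn2 hm) hkey hcomm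


lemma covering (hn : 1 ≤ n) (g : GM n m) :
    ∃ t, Iset n m t ∧ ∃ h ∈ HM n m, g = rep n m t * h := by
  have hone : ∃ t, Iset n m t ∧ ∃ h ∈ HM n m, (1 : GM n m) = rep n m t * h :=
    ⟨n, ⟨hn, le_rfl, Or.inl rfl⟩, 1, one_mem _, by rw [rep_n, mul_one]⟩
  have key : ∀ (x : ℕ × ℕ) (g : GM n m),
      (∃ t, Iset n m t ∧ ∃ h ∈ HM n m, g = rep n m t * h) →
      ((∃ t, Iset n m t ∧ ∃ h ∈ HM n m, PresentedGroup.of x * g = rep n m t * h) ∧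
       (∃ t, Iset n m t ∧ ∃ h ∈ HM n m, (PresentedGroup.of x)⁻¹ * g = rep n m t * h)) := by
    rintro ⟨p, q⟩ g ⟨t, ht, h, hh, rfl⟩
    by_cases hx : 1 ≤ p ∧ p < q ∧ q ≤ n
    · obtain ⟨hp, hpq, hq⟩ := hx
      have hof : (PresentedGroup.of (p, q) : GM n m) = BB n m p q := (BB_of n m hpq).symm
      constructor
      · refine ⟨sig m p q t, sig_mem n m hsym hval htrans hp hpq hq ht,
          ((rep n m (sig m p q t))⁻¹ * BB n m p q * rep n m t) * h,
          mul_mem (step' n m hsym hval htrans hp hpq hq ht) hh, ?_⟩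
        rw [hof]; group
      · have ht' := sig_mem n m hsym hval htrans hp hpq hq ht
        have hst := step' n m hsym hval htrans hp hpq hq ht'
        rw [sig_invol m (by omega : p ≠ q)] at hst
        have hst' : (rep n m (sig m p q t))⁻¹ * (BB n m p q)⁻¹ * rep n m t ∈ HM n m := by
          have e : (rep n m (sig m p q t))⁻¹ * (BB n m p q)⁻¹ * rep n m t =
              ((rep n m t)⁻¹ * BB n m p q * rep n m (sig m p q t))⁻¹ := by group
          rw [e]; exact inv_mem hst
        refine ⟨sig m p q t, ht',
          ((rep n m (sig m p q t))⁻¹ * (BB n m p q)⁻¹ * rep n m t) * h,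
          mul_mem hst' hh, ?_⟩
        rw [hof]; group
    · have h1 : (PresentedGroup.of (p, q) : GM n m) = 1 := of_triv n m hx
      constructor
      · exact ⟨t, ht, h, hh, by rw [h1, one_mul]⟩
      · exact ⟨t, ht, h, hh, by rw [h1, inv_one, one_mul]⟩
  have main : ∀ w : FreeGroup (ℕ × ℕ), ∀ g : GM n m,
      (∃ t, Iset n m t ∧ ∃ h ∈ HM n m, g = rep n m t * h) →
      (∃ t, Iset n m t ∧ ∃ h ∈ HM n m, pP n m w * g = rep n m t * h) := by
    intro w
    refine FreeGroup.induction_on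
      (C := fun w => ∀ g : GM n m,
        (∃ t, Iset n m t ∧ ∃ h ∈ HM n m, g = rep n m t * h) →
        (∃ t, Iset n m t ∧ ∃ h ∈ HM n m, pP n m w * g = rep n m t * h))
      w ?_ ?_ ?_ ?_
    · intro g hg; rwa [map_one, one_mul]
    · intro x g hg; exact (key x g hg).1
    · intro x _ g hg; rw [map_inv]; exact (key x g hg).2
    · intro x y hx hy g hg; rw [map_mul, mul_assoc]; exact hx _ (hy _ hg)
  obtain ⟨w, rfl⟩ := QuotientGroup.mk'_surjective (Subgroup.normalClosure (manfRels n m)) g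
  have hm := main w 1 hone
  rwa [mul_one] at hm

lemma index_le (hn : 1 ≤ n) :
    (HM n m).index ≤ ((Finset.Icc 1 n).filter (fun i => i = n ∨ m i n = 1)).card := by
  set T := (Finset.Icc 1 n).filter (fun i => i = n ∨ m i n = 1) with hT
  have hsurj : Function.Surjective
      (fun t : {x // x ∈ T} =>
        (QuotientGroup.mk (rep n m t.1) : GM n m ⧸ HM n m)) := by
    intro x
    obtain ⟨g, rfl⟩ := QuotientGroup.mk_surjective x
    obtain ⟨t, ⟨ht1, htn, htI⟩, h, hh, hg⟩ := covering n m hsym hval htrans hn g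
    refine ⟨⟨t, ?_⟩, ?_⟩
    · rw [hT, Finset.mem_filter, Finset.mem_Icc]
      exact ⟨⟨ht1, htn⟩, htI⟩
    · show QuotientGroup.mk (rep n m t) = QuotientGroup.mk g
      rw [hg]
      exact (QuotientGroup.mk_mul_of_mem (rep n m t) hh).symm
  calc (HM n m).index = Nat.card (GM n m ⧸ HM n m) := rfl
    _ ≤ Nat.card {x // x ∈ T} := Nat.card_le_card_of_surjective _ hsurj
    _ = T.card := Nat.card_eq_finsetCard T

end Main
end Stmt8A

theorem stmt8 (n : ℕ) (hn : 1 ≤ n) (m : ℕ → ℕ → ℕ)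
    (hsym : ∀ i j, m i j = m j i)
    (hval : ∀ i j, 1 ≤ i → i ≤ n → 1 ≤ j → j ≤ n → i ≠ j → m i j = 1 ∨ m i j = 2)
    (htrans : ∀ i j k, 1 ≤ i → i ≤ n → 1 ≤ j → j ≤ n → 1 ≤ k → k ≤ n →
      i ≠ j → j ≠ k → i ≠ k → m i j = 1 → m j k = 1 → m i k = 1) :
    -- the subgroup `H_M`
    letI H : Subgroup (PresentedGroup (manfRels n m)) :=
      Subgroup.closure
        {x | (∃ i j, 1 ≤ i ∧ i < j ∧ j < n ∧ x = PresentedGroup.of (i, j)) ∨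
             (∃ i, 1 ≤ i ∧ i < n ∧ m i n ≠ 1 ∧ x = PresentedGroup.of (i, n)) ∨
             (∃ i, 1 ≤ i ∧ i < n ∧ m i n = 1 ∧ x = (PresentedGroup.of (i, n)) ^ 2)}
    -- `G_M = ⋃_{t ∈ I} b̃_{tn} H_M`, where `b̃_{nn} = 1`
    (∀ g : PresentedGroup (manfRels n m), ∃ t, (1 ≤ t ∧ t ≤ n ∧ (t = n ∨ m t n = 1)) ∧
      ∃ h ∈ H, g = (if t = n then 1 else PresentedGroup.of (t, n)) * h) ∧
    -- in particular `H_M` has index at most `|I|` in `G_M`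
    H.index ≤ ((Finset.Icc 1 n).filter (fun i => i = n ∨ m i n = 1)).card := by
  constructor
  · intro g
    obtain ⟨t, ht, h, hh, hg⟩ := Stmt8A.covering n m hsym hval htrans hn g
    exact ⟨t, ht, h, hh, hg⟩
  · exact Stmt8A.index_le n m hsym hval htrans hn
end

section
/- Let M = (m_{ij}) be a symmetric matrix with m_{ij} ≥ 2 for all i ≠ j, and set b_{ij} = a_{ij}^{m_{ij}} ∈ Br_n. Then for all 1 ≤ i < j < k < l ≤ n with m_{jk} = 2, the relation b_{ik} b_{jk} b_{jl} b_{jk}^{−1} = b_{jk} b_{jl} b_{jk}^{−1} b_{ik} holds in Br_n. -/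
namespace BraidAux

lemma rel_eq_one {n : ℕ} {r : FreeGroup ℕ} (h : r ∈ braidRels n) :
    PresentedGroup.mk (braidRels n) r = 1 := by
  have : r ∈ Subgroup.normalClosure (braidRels n) := Subgroup.subset_normalClosure h
  exact (QuotientGroup.eq_one_iff r).mpr this

lemma braid_rel {n t : ℕ} (h1 : 1 ≤ t) (h2 : t + 2 ≤ n) :
    braidGen n t * braidGen n (t+1) * braidGen n t
      = braidGen n (t+1) * braidGen n t * braidGen n (t+1) := by
  have h := rel_eq_one (n := n)
    (r := FreeGroup.of t * FreeGroup.of (t+1) * FreeGroup.of t *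
      (FreeGroup.of (t+1) * FreeGroup.of t * FreeGroup.of (t+1))⁻¹)
    (Or.inl ⟨t, h1, h2, rfl⟩)
  simp only [map_mul, map_inv, mul_inv_eq_one] at h
  exact h

lemma comm_rel {n s t : ℕ} (h1 : 1 ≤ s) (h2 : s + 2 ≤ t) (h3 : t + 1 ≤ n) :
    braidGen n s * braidGen n t = braidGen n t * braidGen n s := by
  have h := rel_eq_one (n := n)
    (r := FreeGroup.of s * FreeGroup.of t * (FreeGroup.of t * FreeGroup.of s)⁻¹)
    (Or.inr (Or.inl ⟨s, t, h1, h2, h3, rfl⟩))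
  simp only [map_mul, map_inv, mul_inv_eq_one] at h
  exact h

lemma comm_gen {n s t : ℕ} (hs : 1 ≤ s) (ht : 1 ≤ t) (hsn : s + 1 ≤ n) (htn : t + 1 ≤ n)
    (hd : s + 2 ≤ t ∨ t + 2 ≤ s) : Commute (braidGen n s) (braidGen n t) := by
  rcases hd with h | h
  · exact comm_rel hs h htn
  · exact (comm_rel ht h hsn).symm

/-- the descending product `σ_{j-1} ⋯ σ_{i+1}` -/
def D (n i j : ℕ) : BraidGroup n :=
  (((List.range (j - 1 - i)).map (fun t => braidGen n (j - 1 - t))).prod)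

lemma band_eq (n i j : ℕ) : band n i j = D n i j * braidGen n i * (D n i j)⁻¹ := rfl

lemma D_self (n i : ℕ) : D n i (i+1) = 1 := by
  simp [D, Nat.add_sub_cancel]

lemma band_self (n i : ℕ) : band n i (i+1) = braidGen n i := by
  rw [band_eq, D_self]; group

lemma D_top {n i j : ℕ} (h : i + 1 ≤ j) : D n i (j+1) = braidGen n j * D n i j := by
  unfold D
  rw [show j + 1 - 1 - i = (j - 1 - i) + 1 by omega, List.range_succ_eq_map,
      List.map_cons, List.prod_cons, List.map_map]
  have h1 : ((fun t => braidGen n (j + 1 - 1 - t)) ∘ (· + 1))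
      = fun t => braidGen n (j - 1 - t) := by
    funext t; simp only [Function.comp_apply]; congr 1; omega
  rw [h1]
  congr 2 <;> omega

lemma band_top {n i j : ℕ} (h : i + 1 ≤ j) :
    band n i (j+1) = braidGen n j * band n i j * (braidGen n j)⁻¹ := by
  rw [band_eq, band_eq, D_top h]
  group

lemma D_bot {n i j : ℕ} (h : i + 2 ≤ j) : D n i j = D n (i+1) j * braidGen n (i+1) := by
  unfold D
  rw [show j - 1 - i = (j - 1 - (i+1)) + 1 by omega, List.range_succ, List.map_append,
      List.prod_append]
  simp only [List.map_cons, List.map_nil, List.prod_cons, List.prod_nil, mul_one]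
  congr 2
  omega

lemma comm_gen_D {n t i j : ℕ} (ht : 1 ≤ t) (htn : t + 1 ≤ n) (hjn : j ≤ n)
    (hcond : t + 1 ≤ i ∨ j + 1 ≤ t) : Commute (braidGen n t) (D n i j) := by
  apply Commute.list_prod_right
  intro x hx
  simp only [List.mem_map, List.mem_range] at hx
  obtain ⟨u, hu, rfl⟩ := hx
  have hs1 : i + 1 ≤ j - 1 - u := by omega
  have hs2 : j - 1 - u ≤ j - 1 := by omega
  exact comm_gen ht (by omega) htn (by omega) (by omega)

lemma comm_gen_band {n t i j : ℕ} (ht : 1 ≤ t) (htn : t + 1 ≤ n) (hi : 1 ≤ i) (hij : i < j)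
    (hjn : j ≤ n) (hcond : t + 2 ≤ i ∨ j + 1 ≤ t) :
    Commute (braidGen n t) (band n i j) := by
  have h1 : Commute (braidGen n t) (D n i j) := comm_gen_D ht htn hjn (by omega)
  have h2 : Commute (braidGen n t) (braidGen n i) :=
    comm_gen ht hi htn (by omega) (by omega)
  rw [band_eq]
  exact (h1.mul_right h2).mul_right h1.inv_right

lemma band_bot {n i j : ℕ} (hi : 1 ≤ i) (h : i + 2 ≤ j) (hjn : j ≤ n) :
    band n i j = (braidGen n i)⁻¹ * band n (i+1) j * braidGen n i := by
  set c := braidGen n i with hc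
  set b := braidGen n (i+1) with hb
  set E := D n (i+1) j with hE
  have hcD : Commute c E := comm_gen_D hi (by omega) hjn (by omega)
  have hbr : c * b * c = b * c * b := braid_rel hi (by omega)
  have key : b * c * b⁻¹ = c⁻¹ * b * c := by
    have h2 : c * (b * c * b⁻¹) = c * (c⁻¹ * b * c) := by
      calc c * (b * c * b⁻¹) = (c * b * c) * b⁻¹ := by group
      _ = (b * c * b) * b⁻¹ := by rw [hbr]
      _ = c * (c⁻¹ * b * c) := by group
    exact mul_left_cancel h2
  rw [band_eq, band_eq, D_bot h, ← hE, ← hb, ← hc]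
  calc E * b * c * (E * b)⁻¹
      = E * (b * c * b⁻¹) * E⁻¹ := by group
    _ = E * (c⁻¹ * b * c) * E⁻¹ := by rw [key]
    _ = (E * c⁻¹) * b * (c * E⁻¹) := by group
    _ = (c⁻¹ * E) * b * (E⁻¹ * c) := by rw [← hcD.inv_left.eq, hcD.inv_right.eq]
    _ = c⁻¹ * (E * b * E⁻¹) * c := by group

/-- `a_{jk}` and `σ_k` satisfy the braid relation. -/
lemma band_braid {n : ℕ} : ∀ g j k, k = j + g + 1 → 1 ≤ j → k + 1 ≤ n →
    band n j k * braidGen n k * band n j k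
      = braidGen n k * band n j k * braidGen n k := by
  intro g
  induction g with
  | zero =>
    intro j k hk hj hkn
    subst hk
    rw [band_self]
    exact braid_rel hj (by omega)
  | succ g ih =>
    intro j k hk hj hkn
    have hbot : band n j k = (braidGen n j)⁻¹ * band n (j+1) k * braidGen n j :=
      band_bot hj (by omega) (by omega)
    have hcomm : Commute (braidGen n j) (braidGen n k) :=
      comm_gen hj (by omega) (by omega) hkn (by omega)
    set c := braidGen n j
    set s := braidGen n k
    set b := band n (j+1) k with hbdef
    have ihb : b * s * b = s * b * s := ih (j+1) k (by omega) (by omega) hkn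
    rw [hbot]
    calc c⁻¹ * b * c * s * (c⁻¹ * b * c)
        = c⁻¹ * b * (c * s * c⁻¹) * b * c := by group
      _ = c⁻¹ * b * (s * c * c⁻¹) * b * c := by rw [hcomm.eq]
      _ = c⁻¹ * (b * s * b) * c := by group
      _ = c⁻¹ * (s * b * s) * c := by rw [ihb]
      _ = (c⁻¹ * s) * b * (s * c) := by group
      _ = (s * c⁻¹) * b * (c * s) := by rw [hcomm.inv_left.eq, ← hcomm.eq]
      _ = s * (c⁻¹ * b * c) * s := by group

/-- R2: `a_{ik} a_{jk} = a_{jk} a_{ij}` for `i < j < k`. -/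
lemma R2 {n : ℕ} : ∀ g i j k, 1 ≤ i → i < j → k = j + g + 1 → k ≤ n →
    band n i k * band n j k = band n j k * band n i j := by
  intro g
  induction g with
  | zero =>
    intro i j k hi hij hk hkn
    subst hk
    rw [band_self, band_top (by omega)]
    group
  | succ g ih =>
    intro i j k hi hij hk hkn
    obtain ⟨k', rfl⟩ : ∃ k', k = k' + 1 := ⟨j + g + 1, by omega⟩
    have htopi : band n i (k'+1) = braidGen n k' * band n i k' * (braidGen n k')⁻¹ :=
      band_top (by omega)
    have htopj : band n j (k'+1) = braidGen n k' * band n j k' * (braidGen n k')⁻¹ :=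
      band_top (by omega)
    have hcomm : Commute (braidGen n k') (band n i j) :=
      comm_gen_band (by omega) (by omega) hi hij (by omega) (by omega)
    have ihe : band n i k' * band n j k' = band n j k' * band n i j :=
      ih i j k' hi hij (by omega) (by omega)
    rw [htopi, htopj]
    set s := braidGen n k'
    set x := band n i k'
    set y := band n j k'
    set z := band n i j
    have hz : s * z * s⁻¹ = z := by rw [hcomm.eq]; group
    calc s * x * s⁻¹ * (s * y * s⁻¹) = s * (x * y) * s⁻¹ := by group
      _ = s * (y * z) * s⁻¹ := by rw [ihe]
      _ = (s * y * s⁻¹) * (s * z * s⁻¹) := by group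
      _ = s * y * s⁻¹ * z := by rw [hz]

/-- R1: `a_{jk} a_{jl} = a_{kl} a_{jk}` for `j < k < l`. -/
lemma R1 {n : ℕ} : ∀ g j k l, 1 ≤ j → j < k → l = k + g + 1 → l ≤ n →
    band n j k * band n j l = band n k l * band n j k := by
  intro g
  induction g with
  | zero =>
    intro j k l hj hjk hl hln
    subst hl
    rw [band_top (by omega), band_self]
    have hbb := band_braid (n := n) (k - j - 1) j k (by omega) hj (by omega)
    set s := braidGen n k
    set y := band n j k
    calc y * (s * y * s⁻¹) = (y * s * y) * s⁻¹ := by group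
      _ = (s * y * s) * s⁻¹ := by rw [hbb]
      _ = s * y := by group
  | succ g ih =>
    intro j k l hj hjk hl hln
    obtain ⟨l', rfl⟩ : ∃ l', l = l' + 1 := ⟨k + g + 1, by omega⟩
    have htopj : band n j (l'+1) = braidGen n l' * band n j l' * (braidGen n l')⁻¹ :=
      band_top (by omega)
    have htopk : band n k (l'+1) = braidGen n l' * band n k l' * (braidGen n l')⁻¹ :=
      band_top (by omega)
    have hcomm : Commute (braidGen n l') (band n j k) :=
      comm_gen_band (by omega) (by omega) hj hjk (by omega) (by omega)
    have ihe : band n j k * band n j l' = band n k l' * band n j k :=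
      ih j k l' hj hjk (by omega) (by omega)
    rw [htopj, htopk]
    set s := braidGen n l'
    set y := band n j k
    set u := band n j l'
    set v := band n k l'
    have hy : s * y * s⁻¹ = y := by rw [hcomm.eq]; group
    calc y * (s * u * s⁻¹) = (y * s) * u * s⁻¹ := by group
      _ = (s * y) * u * s⁻¹ := by rw [← hcomm.eq]
      _ = s * (y * u) * s⁻¹ := by group
      _ = s * (v * y) * s⁻¹ := by rw [ihe]
      _ = (s * v * s⁻¹) * (s * y * s⁻¹) := by group
      _ = s * v * s⁻¹ * y := by rw [hy]

/-- `a_{ij}` commutes with `a_{kl}` for disjoint `i<j<k<l`. -/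
lemma band_disjoint_comm {n i j k l : ℕ} (hi : 1 ≤ i) (hij : i < j) (hjk : j < k)
    (hkl : k < l) (hln : l ≤ n) : Commute (band n i j) (band n k l) := by
  have hD : Commute (band n i j) (D n k l) := by
    apply Commute.list_prod_right
    intro x hx
    simp only [List.mem_map, List.mem_range] at hx
    obtain ⟨u, hu, rfl⟩ := hx
    have hs1 : k + 1 ≤ l - 1 - u := by omega
    have hs2 : l - 1 - u ≤ l - 1 := by omega
    exact (comm_gen_band (by omega) (by omega) hi hij (by omega) (by omega)).symm
  have hk : Commute (band n i j) (braidGen n k) :=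
    (comm_gen_band (by omega) (by omega) hi hij (by omega) (by omega)).symm
  rw [band_eq n k l]
  exact (hD.mul_right hk).mul_right hD.inv_right

/-- The key commutation. -/
lemma key_commute {n i j k l : ℕ} (hi : 1 ≤ i) (hij : i < j) (hjk : j < k) (hkl : k < l)
    (hln : l ≤ n) :
    Commute (band n i k) (band n j k ^ 2 * band n j l * (band n j k ^ 2)⁻¹) := by
  have hR1 : band n j k * band n j l = band n k l * band n j k :=
    R1 (n := n) (l - k - 1) j k l (by omega) hjk (by omega) hln
  have hR2 : band n i k * band n j k = band n j k * band n i j :=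
    R2 (n := n) (k - j - 1) i j k hi hij (by omega) (by omega)
  have hR3 : Commute (band n i j) (band n k l) :=
    band_disjoint_comm hi hij hjk hkl hln
  set A := band n i k
  set B := band n j k
  set C := band n j l
  set P := band n i j
  set Q := band n k l
  have hZ : B ^ 2 * C * (B ^ 2)⁻¹ = B * Q * B⁻¹ := by
    have h1 : B * C * B⁻¹ = Q := by rw [hR1]; group
    calc B ^ 2 * C * (B ^ 2)⁻¹ = B * (B * C * B⁻¹) * B⁻¹ := by rw [pow_two]; group
      _ = B * Q * B⁻¹ := by rw [h1]
  rw [hZ]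
  show A * (B * Q * B⁻¹) = (B * Q * B⁻¹) * A
  have hPA : B * P * B⁻¹ = A := by rw [← hR2]; group
  calc A * (B * Q * B⁻¹) = (A * B) * Q * B⁻¹ := by group
    _ = (B * P) * Q * B⁻¹ := by rw [hR2]
    _ = B * (P * Q) * B⁻¹ := by group
    _ = B * (Q * P) * B⁻¹ := by rw [hR3.eq]
    _ = (B * Q * B⁻¹) * (B * P * B⁻¹) := by group
    _ = (B * Q * B⁻¹) * A := by rw [hPA]

end BraidAux

theorem stmt13 (n : ℕ) (m : ℕ → ℕ → ℕ)
    (hsym : ∀ i j, m i j = m j i)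
    (hM : ∀ i j, 1 ≤ i → i ≤ n → 1 ≤ j → j ≤ n → i ≠ j → 2 ≤ m i j)
    (i j k l : ℕ) (h1 : 1 ≤ i) (h2 : i < j) (h3 : j < k) (h4 : k < l) (h5 : l ≤ n)
    (hjk : m j k = 2) :
    band n i k ^ m i k * band n j k ^ m j k * band n j l ^ m j l * (band n j k ^ m j k)⁻¹ =
      band n j k ^ m j k * band n j l ^ m j l * (band n j k ^ m j k)⁻¹ * band n i k ^ m i k := by
  rw [hjk]
  set A := band n i k
  set B := band n j k
  set C := band n j l
  have hkey : Commute A (B ^ 2 * C * (B ^ 2)⁻¹) :=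
    BraidAux.key_commute h1 h2 h3 h4 h5
  have h : Commute (A ^ m i k) ((B ^ 2 * C * (B ^ 2)⁻¹) ^ m j l) := hkey.pow_pow _ _
  rw [conj_pow] at h
  have he := h.eq
  simp only [mul_assoc] at he ⊢
  exact he
end

section
/- Let M = (m_{ij}) be a symmetric matrix with m_{ij} ≥ 2 for all i ≠ j, and set b_{ij} = a_{ij}^{m_{ij}} ∈ Br_n, with the conventions a_{ji} = a_{ij} and b_{ji} = b_{ij}. Then for all triples i,j,k in cyclic order (i.e. i<j<k, j<k<i, or k<i<j) with m_{ij} = m_{ik} = 2 and m_{jk} = 2ν for an integer ν ≥ 1, the relations (b_{ij} b_{ik})^{ν−1} b_{jk} b_{ij} b_{ik} = b_{ik} (b_{ij} b_{ik})^{ν−1} b_{jk} b_{ij} = (b_{ij} b_{ik})^{ν} b_{jk} hold in Br_n. -/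
/-- `b_{ij} = a_{ij}^{m_{ij}}` with the unordered-pair conventions `a_{ji} = a_{ij}`,
`b_{ji} = b_{ij}`. -/
def bp (n : ℕ) (m : ℕ → ℕ → ℕ) (i j : ℕ) : BraidGroup n := bandS n i j ^ m i j

lemma core_abs {G : Type*} [Group G] (u v z Δ : G)
    (h1 : u*v*z = Δ) (h2 : v*(z*u) = Δ) (h3 : z*(u*v) = Δ) (hc : Commute Δ v) (t : ℕ) :
    (u*v)^t * z^(t+1) * u * v = v * (u*v)^t * z^(t+1) * u ∧
    v * (u*v)^t * z^(t+1) * u = (u*v)^(t+1) * z^(t+1) := by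
  have hcz : Commute (u*v) z := h1.trans h3.symm
  have hp : ∀ k : ℕ, (u*v)^k * z^k = Δ^k := fun k => by rw [← hcz.mul_pow, h1]
  have hA : (u*v)^t * z^(t+1) * u * v = Δ^(t+1) := by
    calc (u*v)^t * z^(t+1) * u * v = (u*v)^t * (z^t * (z*(u*v))) := by
          simp only [pow_succ, mul_assoc]
      _ = (u*v)^t * z^t * Δ := by rw [h3, mul_assoc]
      _ = Δ^t * Δ := by rw [hp t]
      _ = Δ^(t+1) := (pow_succ Δ t).symm
  have hB : v * (u*v)^t * z^(t+1) * u = Δ^(t+1) := by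
    have e : (u*v)^t * z^(t+1) = Δ^t * z := by rw [pow_succ, ← mul_assoc, hp t]
    calc v * (u*v)^t * z^(t+1) * u = v * ((u*v)^t * z^(t+1)) * u := by rw [mul_assoc v]
      _ = v * (Δ^t * z) * u := by rw [e]
      _ = v * Δ^t * z * u := by rw [← mul_assoc]
      _ = Δ^t * v * z * u := by rw [← (hc.pow_left t).eq]
      _ = Δ^t * (v*(z*u)) := by simp only [mul_assoc]
      _ = Δ^t * Δ := by rw [h2]
      _ = Δ^(t+1) := (pow_succ Δ t).symm
  exact ⟨hA.trans hB.symm, hB.trans (hp (t+1)).symm⟩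

lemma key_abs {G : Type*} [Group G] (X Y Z : G) (h1 : Z*X = Y*Z) (h2 : Y*Z = X*Y)
    (ν : ℕ) (hν : 1 ≤ ν) :
    (X^2*Y^2)^(ν-1) * Z^(2*ν) * X^2 * Y^2 = Y^2 * (X^2*Y^2)^(ν-1) * Z^(2*ν) * X^2
    ∧ Y^2 * (X^2*Y^2)^(ν-1) * Z^(2*ν) * X^2 = (X^2*Y^2)^ν * Z^(2*ν) := by
  have hzx : Z*X = X*Y := h1.trans h2
  have W1 : ∀ w : G, Y*(Z*w) = X*(Y*w) := fun w => by rw [← mul_assoc, h2, mul_assoc]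
  have W2 : ∀ w : G, Z*(X*w) = X*(Y*w) := fun w => by rw [← mul_assoc, hzx, mul_assoc]
  have e1 : (X*Y)*X = Y*(X*Y) := by
    conv_lhs => rw [← h2]
    rw [mul_assoc, hzx]
  have e1r : X*(Y*X) = Y*(X*Y) := by rw [← mul_assoc, e1]
  have W3 : ∀ w : G, X*(Y*(X*w)) = Y*(X*(Y*w)) := fun w => by
    rw [← mul_assoc, ← mul_assoc, e1, mul_assoc, mul_assoc]
  have q1 : X^2*Y^2*Z^2 = (X*Y)^3 := by
    simp only [pow_succ, pow_zero, one_mul, mul_assoc]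
    rw [W1, h2, W3]
  have q2 : Y^2*(Z^2*X^2) = (X*Y)^3 := by
    simp only [pow_succ, pow_zero, one_mul, mul_assoc]
    rw [W1, W2, ← W3, e1r]
  have q3 : Z^2*(X^2*Y^2) = (X*Y)^3 := by
    simp only [pow_succ, pow_zero, one_mul, mul_assoc]
    rw [W2, W2, ← W3]
  have e2 : SemiconjBy (X*Y) Y Z := by
    have : Z*(X*Y) = (X*Y)*Y := by rw [← mul_assoc, hzx]
    exact this.symm
  have e3 : SemiconjBy (X*Y) Z X := by
    show (X*Y)*Z = X*(X*Y)
    rw [mul_assoc, h2]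
  have e1' : SemiconjBy (X*Y) X Y := e1
  have cY : Commute ((X*Y)^3) Y := by
    have h0 := e1'.mul_left (e3.mul_left e2)
    have h : (X*Y)*((X*Y)*(X*Y)) = (X*Y)^3 := by
      simp only [pow_succ, pow_zero, one_mul, mul_assoc]
    rwa [h] at h0
  obtain ⟨t, rfl⟩ : ∃ t, ν = t+1 := ⟨ν-1, (Nat.succ_pred_eq_of_pos hν).symm⟩
  have hz : Z^(2*(t+1)) = (Z^2)^(t+1) := pow_mul Z 2 (t+1)
  have H := core_abs (X^2) (Y^2) (Z^2) ((X*Y)^3) q1 q2 q3 (cY.pow_right 2) t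
  simpa [hz, Nat.add_sub_cancel] using H

lemma rel_one {n : ℕ} {r : FreeGroup ℕ} (hr : r ∈ braidRels n) :
    PresentedGroup.mk (braidRels n) r = 1 := by
  refine (QuotientGroup.eq_one_iff r).mpr ?_
  exact Subgroup.subset_normalClosure hr

lemma braid_rel {n : ℕ} {i : ℕ} (h1 : 1 ≤ i) (h2 : i + 2 ≤ n) :
    braidGen n i * braidGen n (i+1) * braidGen n i
      = braidGen n (i+1) * braidGen n i * braidGen n (i+1) := by
  have := rel_one (n := n) (Or.inl ⟨i, h1, h2, rfl⟩)
  rw [map_mul, map_mul, map_inv, map_mul, map_mul, mul_inv_eq_one] at this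
  exact this

lemma comm_rel {n i j : ℕ} (h1 : 1 ≤ i) (h2 : i + 2 ≤ j) (h3 : j + 1 ≤ n) :
    braidGen n i * braidGen n j = braidGen n j * braidGen n i := by
  have := rel_one (n := n) (Or.inr (Or.inl ⟨i, j, h1, h2, h3, rfl⟩))
  rw [map_mul, map_inv, map_mul, mul_inv_eq_one] at this
  exact this

lemma gen_zero {n : ℕ} : braidGen n 0 = 1 :=
  rel_one (n := n) (Or.inr (Or.inr ⟨0, Or.inl rfl, rfl⟩))

lemma gen_big {n i : ℕ} (h : n ≤ i) : braidGen n i = 1 :=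
  rel_one (n := n) (Or.inr (Or.inr ⟨i, Or.inr h, rfl⟩))

/-- commutation for all valid/invalid indices with gap ≥ 2 -/
lemma gen_comm {n i j : ℕ} (h : i + 2 ≤ j) :
    braidGen n i * braidGen n j = braidGen n j * braidGen n i := by
  rcases Nat.eq_zero_or_pos i with hi | hi
  · subst hi; rw [gen_zero, one_mul, mul_one]
  rcases le_or_gt (j+1) n with hj | hj
  · exact comm_rel hi h hj
  · rw [gen_big (by omega : n ≤ j), one_mul, mul_one]

/-- descending product σ_b σ_{b-1} ⋯ σ_{b-len+1} -/
def Dw (n b len : ℕ) : BraidGroup n :=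
  ((List.range len).map (fun t => braidGen n (b - t))).prod

lemma band_eq_Dw (n i j : ℕ) :
    band n i j = Dw n (j-1) (j-1-i) * braidGen n i * (Dw n (j-1) (j-1-i))⁻¹ := rfl

lemma Dw_zero (n b : ℕ) : Dw n b 0 = 1 := rfl

lemma Dw_succ_front (n b len : ℕ) :
    Dw n b (len+1) = braidGen n b * Dw n (b-1) len := by
  unfold Dw
  rw [List.range_succ_eq_map]
  simp only [List.map_cons, List.prod_cons, List.map_map]
  have hf : ((fun t => braidGen n (b - t)) ∘ Nat.succ) = (fun t => braidGen n (b-1-t)) := by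
    funext t
    simp only [Function.comp]
    congr 1
    omega
  rw [hf]
  norm_num

lemma Dw_succ_back (n b len : ℕ) :
    Dw n b (len+1) = Dw n b len * braidGen n (b-len) := by
  unfold Dw
  rw [List.range_succ]
  simp

lemma Dw_split (n b l1 l2 : ℕ) : Dw n b (l1+l2) = Dw n b l1 * Dw n (b-l1) l2 := by
  induction l1 generalizing b with
  | zero => simp [Dw_zero]
  | succ l ih =>
      have h1 : l + 1 + l2 = (l + l2) + 1 := by omega
      have h2 : b - 1 - l = b - (l+1) := by omega
      rw [h1, Dw_succ_front, ih, Dw_succ_front, mul_assoc, h2]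

lemma comm_Dw {n b len : ℕ} {g : BraidGroup n}
    (H : ∀ t, t < len → braidGen n (b - t) * g = g * braidGen n (b - t)) :
    Dw n b len * g = g * Dw n b len := by
  induction len with
  | zero => simp [Dw_zero]
  | succ l ih =>
      rw [Dw_succ_back, mul_assoc, H l (by omega), ← mul_assoc,
        ih (fun t ht => H t (by omega)), mul_assoc]

/-- σ_k commutes with Dw if k ≥ b+2 -/
lemma gen_comm_Dw {n b len k : ℕ} (h : b + 2 ≤ k) :
    Dw n b len * braidGen n k = braidGen n k * Dw n b len :=
  comm_Dw (fun t _ => gen_comm (by omega : (b - t) + 2 ≤ k))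

/-- conjugation form of the braid relation -/
lemma braid_conj {n q : ℕ} (h1 : 1 ≤ q-1) (h2 : q-1+2 ≤ n) (hq : 2 ≤ q) :
    braidGen n q * braidGen n (q-1) * (braidGen n q)⁻¹
      = (braidGen n (q-1))⁻¹ * braidGen n q * braidGen n (q-1) := by
  have hbr := braid_rel (n := n) (i := q-1) h1 h2
  rw [show q - 1 + 1 = q from by omega] at hbr
  set a := braidGen n (q-1)
  set b := braidGen n q
  have h3 : b*a*b⁻¹ = a⁻¹*(b*a) := by
    rw [eq_inv_mul_iff_mul_eq, ← mul_assoc, ← mul_assoc, hbr]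
    simp [mul_assoc]
  rw [h3, mul_assoc]

/-- alternative form of the band generator:
`a_{pq} = (σ_{q-2} ⋯ σ_p)⁻¹ σ_{q-1} (σ_{q-2} ⋯ σ_p)` -/
lemma band_alt {n : ℕ} (p : ℕ) (hp : 1 ≤ p) :
    ∀ q, p + 1 ≤ q → q ≤ n →
      band n p q = (Dw n (q-2) (q-1-p))⁻¹ * braidGen n (q-1) * Dw n (q-2) (q-1-p) := by
  intro q
  induction q with
  | zero => omega
  | succ q ih =>
      intro hpq hqn
      rcases Nat.lt_or_ge p q with hlt | hge
      · -- q ≥ p+1, inductive step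
        have hq2 : 2 ≤ q := by omega
        have hIH := ih (by omega) (by omega)
        have hpeel : Dw n (q+1-1) (q+1-1-p) = braidGen n q * Dw n (q-1) (q-1-p) := by
          rw [show q+1-1 = q from rfl, show q - p = (q-1-p)+1 from by omega, Dw_succ_front]
        have hstep : band n p (q+1) = braidGen n q * band n p q * (braidGen n q)⁻¹ := by
          rw [band_eq_Dw, band_eq_Dw, hpeel]
          simp only [mul_inv_rev, mul_assoc]
        set T := Dw n (q-2) (q-1-p) with hT
        have c : Commute T (braidGen n q) := gen_comm_Dw (by omega : (q-2) + 2 ≤ q)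
        have hc' : braidGen n q * T⁻¹ = T⁻¹ * braidGen n q := (c.inv_left.symm).eq
        have hc'' : T * (braidGen n q)⁻¹ = (braidGen n q)⁻¹ * T := (c.inv_right).eq
        have hconj := braid_conj (n := n) (q := q) (by omega) (by omega) hq2
        have hpeel2 : Dw n (q+1-2) (q+1-1-p) = braidGen n (q-1) * T := by
          rw [show q+1-2 = q-1 from by omega, show q+1-1-p = (q-1-p)+1 from by omega,
            Dw_succ_front, show q-1-1 = q-2 from by omega]
        rw [hstep, hIH, hpeel2, mul_inv_rev]
        calc braidGen n q * (T⁻¹ * braidGen n (q-1) * T) * (braidGen n q)⁻¹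
            = (braidGen n q * T⁻¹) * (braidGen n (q-1) * (T * (braidGen n q)⁻¹)) := by
              simp only [mul_assoc]
          _ = (T⁻¹ * braidGen n q) * (braidGen n (q-1) * ((braidGen n q)⁻¹ * T)) := by
              rw [hc', hc'']
          _ = T⁻¹ * (braidGen n q * braidGen n (q-1) * (braidGen n q)⁻¹) * T := by
              simp only [mul_assoc]
          _ = T⁻¹ * ((braidGen n (q-1))⁻¹ * braidGen n q * braidGen n (q-1)) * T := by
              rw [hconj]
          _ = T⁻¹ * (braidGen n (q-1))⁻¹ * braidGen n q * (braidGen n (q-1) * T) := by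
              simp only [mul_assoc]
      · -- base case q = p
        have hq : q = p := by omega
        subst hq
        rw [band_eq_Dw, show q+1-1-q = 0 from by omega, Dw_zero,
          show q+1-1 = q from rfl, show q+1-2 = q-1 from by omega]
        simp [Dw_zero]

/-- `a_{pq}` commutes with `σ_k` for `k ≥ q+1`. -/
lemma band_comm_gen {n p q k : ℕ} (hpq : p + 1 ≤ q) (hk : q + 1 ≤ k) :
    braidGen n k * band n p q = band n p q * braidGen n k := by
  rw [band_eq_Dw]
  have c1 : Commute (braidGen n k) (Dw n (q-1) (q-1-p)) :=
    (Commute.symm (gen_comm_Dw (by omega) : Dw n (q-1) (q-1-p) * braidGen n k = _))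
  have c2 : Commute (braidGen n k) (braidGen n p) :=
    (gen_comm (by omega : p + 2 ≤ k)).symm
  exact ((c1.mul_right c2).mul_right c1.inv_right).eq

/-- braid relation between `a_{pq}` and `σ_q`. -/
lemma band_braid_gen {n p q : ℕ} (hp : 1 ≤ p) (hpq : p + 1 ≤ q) (hq : q + 1 ≤ n) :
    band n p q * braidGen n q * band n p q = braidGen n q * band n p q * braidGen n q := by
  rw [band_alt p hp q hpq (by omega)]
  set T := Dw n (q-2) (q-1-p)
  have c : Commute T (braidGen n q) := gen_comm_Dw (by omega : (q-2) + 2 ≤ q)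
  have hbr := braid_rel (n := n) (i := q-1) (by omega) (by omega)
  rw [show q - 1 + 1 = q from by omega] at hbr
  calc (T⁻¹ * braidGen n (q-1) * T) * braidGen n q * (T⁻¹ * braidGen n (q-1) * T)
      = T⁻¹ * braidGen n (q-1) * (T * braidGen n q * T⁻¹) * braidGen n (q-1) * T := by
        simp only [mul_assoc]
    _ = T⁻¹ * braidGen n (q-1) * braidGen n q * braidGen n (q-1) * T := by
        rw [c.eq]; simp only [mul_assoc, mul_inv_cancel_left]
    _ = T⁻¹ * (braidGen n q * braidGen n (q-1) * braidGen n q) * T := by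
        rw [show T⁻¹ * braidGen n (q-1) * braidGen n q * braidGen n (q-1) * T
            = T⁻¹ * (braidGen n (q-1) * braidGen n q * braidGen n (q-1)) * T from by
          simp only [mul_assoc], hbr]
    _ = (braidGen n q * T⁻¹) * braidGen n (q-1) * (T * braidGen n q) := by
        rw [← c.inv_left.eq, c.eq]; simp only [mul_assoc]
    _ = braidGen n q * (T⁻¹ * braidGen n (q-1) * T) * braidGen n q := by
        simp only [mul_assoc]

/-- the two band relations for p < q < r :
`a_{qr} a_{pq} = a_{pr} a_{qr}` and `a_{pr} a_{qr} = a_{pq} a_{pr}` -/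
lemma band_rels {n p q r : ℕ} (hp : 1 ≤ p) (hpq : p < q) (hqr : q < r) (hr : r ≤ n) :
    band n q r * band n p q = band n p r * band n q r ∧
    band n p r * band n q r = band n p q * band n p r := by
  set V := Dw n (r-1) (r-q) with hV
  set U := Dw n (r-1) (r-1-q) with hU
  set A := band n p q with hA
  have hVU : V = U * braidGen n q := by
    rw [hV, hU, show r - q = (r-1-q)+1 from by omega, Dw_succ_back,
      show r-1-(r-1-q) = q from by omega]
  have hpr : band n p r = V * A * V⁻¹ := by
    rw [band_eq_Dw, show r-1-p = (r-q) + (q-1-p) from by omega, Dw_split,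
      show r-1-(r-q) = q-1 from by omega, hA, band_eq_Dw]
    simp only [mul_inv_rev, mul_assoc, hV]
  have hqr' : band n q r = V * braidGen n q * V⁻¹ := by
    rw [band_eq_Dw, hVU]
    simp only [mul_inv_rev, mul_assoc, inv_mul_cancel_left, hU]
    rw [show braidGen n q * (braidGen n q * ((braidGen n q)⁻¹ * (Dw n (r-1) (r-1-q))⁻¹))
        = braidGen n q * (Dw n (r-1) (r-1-q))⁻¹ from by simp only [mul_assoc,
          mul_inv_cancel_left]]
  have hUA : U * A = A * U := by
    rw [hU, hA]
    refine comm_Dw (fun t ht => ?_)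
    exact band_comm_gen (by omega) (by omega)
  have cUA : Commute U A := hUA
  have cUAi : U⁻¹ * A = A * U⁻¹ := cUA.inv_left.eq
  have hVi : V⁻¹ = (braidGen n q)⁻¹ * U⁻¹ := by rw [hVU, mul_inv_rev]
  have L : band n q r * A = V * (A * U⁻¹) := by
    rw [hqr']
    simp only [mul_assoc, hVi, mul_inv_cancel_left]
    rw [cUAi]
  have R : band n p r * band n q r = V * (A * U⁻¹) := by
    rw [hqr', hpr]
    simp only [mul_assoc, inv_mul_cancel_left]
    rw [hVi]
    simp only [mul_inv_cancel_left]
  have hbb := band_braid_gen (n := n) hp (by omega : p + 1 ≤ q) (by omega : q + 1 ≤ n)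
  rw [← hA] at hbb
  have cAUw : ∀ w : BraidGroup n, A*(U*w) = U*(A*w) := fun w => by
    rw [← mul_assoc, ← hUA, mul_assoc]
  have hbbw : ∀ w : BraidGroup n, A*(braidGen n q*(A*w)) = braidGen n q*(A*(braidGen n q*w)) :=
    fun w => by
      rw [← mul_assoc, ← mul_assoc, ← mul_assoc]
      rw [show A * braidGen n q * A * w = (A * braidGen n q * A) * w from rfl, hbb]
      simp only [mul_assoc]
  have R2 : A * band n p r = V * (A * U⁻¹) := by
    rw [hpr]
    simp only [mul_assoc, hVi]
    rw [hVU]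
    simp only [mul_assoc]
    rw [cAUw, hbbw]
    simp only [mul_inv_cancel_left]
  exact ⟨L.trans R.symm, R.trans R2.symm⟩

theorem stmt14 (n : ℕ) (m : ℕ → ℕ → ℕ)
    (hsym : ∀ i j, m i j = m j i)
    (hM : ∀ i j, 1 ≤ i → i ≤ n → 1 ≤ j → j ≤ n → i ≠ j → 2 ≤ m i j)
    (i j k : ℕ) (hcyc : (i < j ∧ j < k) ∨ (j < k ∧ k < i) ∨ (k < i ∧ i < j))
    (hi1 : 1 ≤ i) (hj1 : 1 ≤ j) (hk1 : 1 ≤ k) (hin : i ≤ n) (hjn : j ≤ n) (hkn : k ≤ n)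
    (ν : ℕ) (hν : 1 ≤ ν) (hij : m i j = 2) (hik : m i k = 2) (hjk : m j k = 2 * ν) :
    (bp n m i j * bp n m i k) ^ (ν - 1) * bp n m j k * bp n m i j * bp n m i k =
        bp n m i k * (bp n m i j * bp n m i k) ^ (ν - 1) * bp n m j k * bp n m i j ∧
    bp n m i k * (bp n m i j * bp n m i k) ^ (ν - 1) * bp n m j k * bp n m i j =
        (bp n m i j * bp n m i k) ^ ν * bp n m j k := by
  rcases hcyc with ⟨h1, h2⟩ | ⟨h1, h2⟩ | ⟨h1, h2⟩
  · -- i < j < k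
    obtain ⟨r1, r2⟩ := band_rels hi1 h1 h2 hkn
    simp only [bp, bandS]
    rw [min_eq_left h1.le, max_eq_right h1.le, min_eq_left (h1.trans h2).le,
      max_eq_right (h1.trans h2).le, min_eq_left h2.le, max_eq_right h2.le, hij, hik, hjk]
    exact key_abs _ _ _ r1 r2 ν hν
  · -- j < k < i
    obtain ⟨r1, r2⟩ := band_rels hj1 h1 h2 hin
    simp only [bp, bandS]
    rw [min_eq_right (h1.trans h2).le, max_eq_left (h1.trans h2).le, min_eq_right h2.le,
      max_eq_left h2.le, min_eq_left h1.le, max_eq_right h1.le, hij, hik, hjk]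
    exact key_abs _ _ _ (r2.symm.trans r1.symm) r1 ν hν
  · -- k < i < j
    obtain ⟨r1, r2⟩ := band_rels hk1 h1 h2 hjn
    simp only [bp, bandS]
    rw [min_eq_left h2.le, max_eq_right h2.le, min_eq_right h1.le, max_eq_left h1.le,
      min_eq_right (h1.trans h2).le, max_eq_left (h1.trans h2).le, hij, hik, hjk]
    exact key_abs _ _ _ r2 (r2.symm.trans r1.symm) ν hν
end
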